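/- arXiv:1401.7460 — 8 statements merged into one kernel-verified Lean document; each statement's English description precedes it below -/
import Mathlib

section
/- Let Z be a convex set and y ∈ Z. Define the weight function t_y(x) = sup{ t ∈ [0,1) : (y - t·x)/(1-t) ∈ Z }. Then the reciprocal of the weight function is convex: for all x₁, x₂ ∈ Z with t_y(x₁) > 0 and t_y(x₂) > 0, and all s ∈ [0,1], one has 1/t_y(s·x₁ + (1-s)·x₂) ≤ s/t_y(x₁) + (1-s)/t_y(x₂). -/
/-! Substituting `r = 1 / t`, the condition `(y - t • x) / (1 - t) ∈ Z` with `0 < t < 1` becomes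
`1 < r ∧ (r - 1)⁻¹ • (r • y - x) ∈ Z`: the pair `(r - 1, r • y - x)`, which depends affinely on
`(r, x)`, lies in the cone over `Z`. So the pairs `(r, x)` form a convex set (`invWeightSet`
describes its fibres), and `1 / t_y(x)` is the infimum of `r` over the fibre at `x`; such an
infimum is convex in `x`. -/

/-- The weight function `t_y(x) = sup{ t ∈ [0,1) : (y - t·x)/(1-t) ∈ Z }`
(with `sSup ∅ = 0` by the real-number convention). -/
noncomputable def weight {V : Type*} [AddCommGroup V] [Module ℝ V] (Z : Set V) (y x : V) : ℝ :=
  sSup {t : ℝ | 0 ≤ t ∧ t < 1 ∧ (1 - t)⁻¹ • (y - t • x) ∈ Z}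

section InvWeight

variable {V : Type*} [AddCommGroup V] [Module ℝ V] {Z : Set V} {y x : V}

def invWeightSet (Z : Set V) (y x : V) : Set ℝ :=
  {r | 1 < r ∧ (r - 1)⁻¹ • (r • y - x) ∈ Z}

lemma inv_one_sub_inv_smul_sub {r : ℝ} (hr : 1 < r) :
    (1 - r⁻¹)⁻¹ • (y - r⁻¹ • x) = (r - 1)⁻¹ • (r • y - x) := by
  have hr₀ : r ≠ 0 := by positivity
  have hr₁ : r - 1 ≠ 0 := sub_ne_zero.2 hr.ne'
  have hinv : (1 - r⁻¹)⁻¹ = (r - 1)⁻¹ * r := by field_simp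
  rw [hinv, mul_smul, smul_sub, smul_smul, mul_inv_cancel₀ hr₀, one_smul]

lemma one_div_weight_le {r : ℝ} (hr : r ∈ invWeightSet Z y x) : 1 / weight Z y x ≤ r := by
  have hr₀ : 0 < r := one_pos.trans hr.1
  have hmem : r⁻¹ ∈ {t : ℝ | 0 ≤ t ∧ t < 1 ∧ (1 - t)⁻¹ • (y - t • x) ∈ Z} :=
    ⟨inv_nonneg.2 hr₀.le, inv_lt_one_of_one_lt₀ hr.1,
      by rw [inv_one_sub_inv_smul_sub hr.1]; exact hr.2⟩
  have hle : r⁻¹ ≤ weight Z y x := le_csSup ⟨1, fun t ht => ht.2.1.le⟩ hmem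
  rw [one_div]
  exact inv_le_of_inv_le₀ hr₀ hle

lemma exists_mem_invWeightSet_lt (hw : 0 < weight Z y x) {c : ℝ} (hc : 1 / weight Z y x < c) :
    ∃ r ∈ invWeightSet Z y x, r < c := by
  set S := {t : ℝ | 0 ≤ t ∧ t < 1 ∧ (1 - t)⁻¹ • (y - t • x) ∈ Z}
  have hS : S.Nonempty := Set.nonempty_iff_ne_empty.2 fun h => by
    simp only [weight, S, h, Real.sSup_empty, lt_irrefl] at hw
  have hc₀ : 0 < c := (one_div_pos.2 hw).trans hc
  obtain ⟨t, ⟨-, ht₁, htZ⟩, hct⟩ :=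
    exists_lt_of_lt_csSup hS ((inv_lt_comm₀ hw hc₀).1 (by rwa [← one_div]))
  have ht₀ : 0 < t := (inv_pos.2 hc₀).trans hct
  have hr : 1 < t⁻¹ := one_lt_inv_iff₀.2 ⟨ht₀, ht₁⟩
  refine ⟨t⁻¹, ⟨hr, ?_⟩, (inv_lt_comm₀ ht₀ hc₀).2 hct⟩
  rwa [← inv_one_sub_inv_smul_sub hr, inv_inv]

lemma add_mem_invWeightSet (hZ : Convex ℝ Z) {x₁ x₂ : V} {r₁ r₂ a b : ℝ}
    (h₁ : r₁ ∈ invWeightSet Z y x₁) (h₂ : r₂ ∈ invWeightSet Z y x₂)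
    (ha : 0 ≤ a) (hb : 0 ≤ b) (hab : a + b = 1) :
    a * r₁ + b * r₂ ∈ invWeightSet Z y (a • x₁ + b • x₂) := by
  have hr : 1 < a * r₁ + b * r₂ := convex_Ioi (1 : ℝ) h₁.1 h₂.1 ha hb hab
  refine ⟨hr, ?_⟩
  have hsum : a * (r₁ - 1) + b * (r₂ - 1) = a * r₁ + b * r₂ - 1 := by
    linear_combination -hab
  have key := convex_iff_div.1 hZ h₁.2 h₂.2 (mul_nonneg ha (sub_pos.2 h₁.1).le)
    (mul_nonneg hb (sub_pos.2 h₂.1).le) (hsum ▸ sub_pos.2 hr)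
  convert key using 1
  rw [hsum]
  have h₁' : r₁ - 1 ≠ 0 := sub_ne_zero.2 h₁.1.ne'
  have h₂' : r₂ - 1 ≠ 0 := sub_ne_zero.2 h₂.1.ne'
  match_scalars <;> field_simp

end InvWeight

theorem reciprocal_weight_convex_general {V : Type*} [AddCommGroup V] [Module ℝ V]
    (Z : Set V) (hZ : Convex ℝ Z) (y : V)
    (x₁ x₂ : V)
    (ht₁ : 0 < weight Z y x₁) (ht₂ : 0 < weight Z y x₂)
    (s : ℝ) (hs0 : 0 ≤ s) (hs1 : s ≤ 1) :
    1 / weight Z y (s • x₁ + (1 - s) • x₂) ≤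
      s / weight Z y x₁ + (1 - s) / weight Z y x₂ := by
  refine le_of_forall_pos_le_add fun ε hε => ?_
  obtain ⟨r₁, hr₁, hr₁ε⟩ := exists_mem_invWeightSet_lt ht₁ (lt_add_of_pos_right _ hε)
  obtain ⟨r₂, hr₂, hr₂ε⟩ := exists_mem_invWeightSet_lt ht₂ (lt_add_of_pos_right _ hε)
  calc 1 / weight Z y (s • x₁ + (1 - s) • x₂) ≤ s * r₁ + (1 - s) * r₂ :=
        one_div_weight_le (add_mem_invWeightSet hZ hr₁ hr₂ hs0 (sub_nonneg.2 hs1) (by ring))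
    _ ≤ s * (1 / weight Z y x₁ + ε) + (1 - s) * (1 / weight Z y x₂ + ε) := by gcongr
    _ = s / weight Z y x₁ + (1 - s) / weight Z y x₂ + ε := by ring

theorem reciprocal_weight_convex {V : Type*} [AddCommGroup V] [Module ℝ V]
    (Z : Set V) (hZ : Convex ℝ Z) (y : V) (hy : y ∈ Z)
    (x₁ x₂ : V) (hx₁ : x₁ ∈ Z) (hx₂ : x₂ ∈ Z)
    (ht₁ : 0 < weight Z y x₁) (ht₂ : 0 < weight Z y x₂)
    (s : ℝ) (hs0 : 0 ≤ s) (hs1 : s ≤ 1) :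
    1 / weight Z y (s • x₁ + (1 - s) • x₂) ≤
      s / weight Z y x₁ + (1 - s) / weight Z y x₂ :=
  reciprocal_weight_convex_general Z hZ y x₁ x₂ ht₁ ht₂ s hs0 hs1
end

section
/- Let Z ⊂ ℝⁿ be a compact convex set and y an element of Z not in the algebraic boundary ∂Z (i.e., every x ∈ Z appears with nonzero weight in some convex decomposition of y). Then there exists an extreme point x of Z such that b(y) = t_y(x), where b(y) = inf_{x ∈ Z} t_y(x) is the boundariness. -/
/-- The boundariness `b(y) = inf_{x ∈ Z} t_y(x)`. -/
noncomputable def bdness {V : Type*} [AddCommGroup V] [Module ℝ V] (Z : Set V) (y : V) : ℝ :=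
  sInf (weight Z y '' Z)

open Set

section Algebraic

variable {V : Type*} [AddCommGroup V] [Module ℝ V] {Z : Set V} {y x : V}

def weightSet (Z : Set V) (y x : V) : Set ℝ :=
  {t : ℝ | 0 ≤ t ∧ t < 1 ∧ (1 - t)⁻¹ • (y - t • x) ∈ Z}

lemma weight_eq_sSup (Z : Set V) (y x : V) : weight Z y x = sSup (weightSet Z y x) := rfl

lemma zero_mem_weightSet (hy : y ∈ Z) (x : V) : 0 ∈ weightSet Z y x :=
  ⟨le_rfl, one_pos, by simpa using hy⟩

lemma bddAbove_weightSet (Z : Set V) (y x : V) : BddAbove (weightSet Z y x) :=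
  ⟨1, fun _ ht => ht.2.1.le⟩

lemma le_weight_of_mem_weightSet {t : ℝ} (ht : t ∈ weightSet Z y x) : t ≤ weight Z y x :=
  le_csSup (bddAbove_weightSet Z y x) ht

lemma weight_nonneg (hy : y ∈ Z) (x : V) : 0 ≤ weight Z y x :=
  le_weight_of_mem_weightSet (zero_mem_weightSet hy x)

lemma mem_weightSet_of_le (hZ : Convex ℝ Z) (hx : x ∈ Z) {s t : ℝ} (hs : s ∈ weightSet Z y x)
    (ht : 0 ≤ t) (hts : t ≤ s) : t ∈ weightSet Z y x := by
  obtain ⟨-, hs1, hsZ⟩ := hs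
  refine ⟨ht, hts.trans_lt hs1, ?_⟩
  have h1t : 1 - t ≠ 0 := by linarith
  have h1s : 1 - s ≠ 0 := by linarith
  have hcombo : (1 - t)⁻¹ • (y - t • x)
      = ((s - t) / (1 - t)) • x + ((1 - s) / (1 - t)) • ((1 - s)⁻¹ • (y - s • x)) := by
    match_scalars
    · field_simp
    · field_simp; ring
  rw [hcombo]
  exact hZ hx hsZ (div_nonneg (by linarith) (by linarith)) (div_nonneg (by linarith) (by linarith))
    (by field_simp; ring)

lemma mem_weightSet_of_lt_weight (hZ : Convex ℝ Z) (hx : x ∈ Z) {t : ℝ} (ht : 0 ≤ t)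
    (htw : t < weight Z y x) : t ∈ weightSet Z y x := by
  have hne : (weightSet Z y x).Nonempty := by
    by_contra h
    rw [not_nonempty_iff_eq_empty] at h
    rw [weight_eq_sSup, h, Real.sSup_empty] at htw
    linarith
  obtain ⟨s, hs, hts⟩ := exists_lt_of_lt_csSup hne htw
  exact mem_weightSet_of_le hZ hx hs ht hts.le

lemma inv_add_div_mem_weightSet (hZ : Convex ℝ Z) {p q : V} {a b t₁ t₂ : ℝ} (ha : 0 ≤ a)
    (hb : 0 ≤ b) (hab : a + b = 1) (h₁ : t₁ ∈ weightSet Z y p) (h₂ : t₂ ∈ weightSet Z y q)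
    (ht₁ : 0 < t₁) (ht₂ : 0 < t₂) : (a / t₁ + b / t₂)⁻¹ ∈ weightSet Z y (a • p + b • q) := by
  obtain ⟨-, ht₁1, hp⟩ := h₁
  obtain ⟨-, ht₂1, hq⟩ := h₂
  set h := a / t₁ + b / t₂ with hh
  have h1 : 1 < h := by
    rcases ha.lt_or_eq with ha' | rfl
    · have : a < a / t₁ := by rw [lt_div_iff₀ ht₁]; nlinarith
      have : b ≤ b / t₂ := by rw [le_div_iff₀ ht₂]; nlinarith
      linarith
    · have : b < b / t₂ := by rw [lt_div_iff₀ ht₂]; nlinarith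
      simp only [zero_div, zero_add] at hh ⊢
      linarith
  refine ⟨by positivity, inv_lt_one_of_one_lt₀ h1, ?_⟩
  have hh1 : h - 1 ≠ 0 := by linarith
  have hh' : h * t₁ * t₂ = a * t₂ + b * t₁ := by rw [hh]; field_simp
  have hinv : (1 - h⁻¹)⁻¹ = h / (h - 1) := by field_simp
  have : 1 - t₁ ≠ 0 := by linarith
  have : 1 - t₂ ≠ 0 := by linarith
  have hcombo : (1 - h⁻¹)⁻¹ • (y - h⁻¹ • (a • p + b • q))
      = (a * (1 - t₁) / (t₁ * (h - 1))) • ((1 - t₁)⁻¹ • (y - t₁ • p))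
        + (b * (1 - t₂) / (t₂ * (h - 1))) • ((1 - t₂)⁻¹ • (y - t₂ • q)) := by
    rw [hinv]
    match_scalars <;> field_simp
    linear_combination hh'
  rw [hcombo]
  refine hZ hp hq (div_nonneg (mul_nonneg ha (by linarith)) (by nlinarith))
    (div_nonneg (mul_nonneg hb (by linarith)) (by nlinarith)) ?_
  field_simp
  linear_combination -hh' - t₁ * t₂ * hab

lemma convexOn_inv_weight (hZ : Convex ℝ Z) (hpos : ∀ x ∈ Z, 0 < weight Z y x) :
    ConvexOn ℝ Z fun x => (weight Z y x)⁻¹ := by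
  refine ⟨hZ, fun p hp q hq a b ha hb hab => ?_⟩
  have hxZ : a • p + b • q ∈ Z := hZ hp hq ha hb hab
  have hp₀ := hpos p hp
  have hq₀ := hpos q hq
  set h := a / weight Z y p + b / weight Z y q
  have hh : 0 < h := by
    rcases ha.lt_or_eq with ha' | rfl
    · positivity
    · obtain rfl : b = 1 := by linarith
      positivity
  have hharm : h⁻¹ ≤ weight Z y (a • p + b • q) := by
    refine le_of_forall_lt_imp_le_of_dense fun c hc => ?_
    rcases le_or_gt c 0 with hc₀ | hc₀
    · exact hc₀.trans (hpos _ hxZ).le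
    -- scaling both weights by `c * h < 1` scales their harmonic combination from `h⁻¹` to `c`
    have hr : 0 < c * h := by positivity
    have hr1 : c * h < 1 := by rwa [← lt_inv_mul_iff₀' hh, mul_one]
    have hmem := inv_add_div_mem_weightSet hZ ha hb hab
      (mem_weightSet_of_lt_weight hZ hp (by positivity) (mul_lt_of_lt_one_left hp₀ hr1))
      (mem_weightSet_of_lt_weight hZ hq (by positivity) (mul_lt_of_lt_one_left hq₀ hr1))
      (by positivity) (by positivity)
    refine le_of_eq_of_le ?_ (le_weight_of_mem_weightSet hmem)
    have hsum : a / (c * h * weight Z y p) + b / (c * h * weight Z y q) = h / (c * h) := by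
      simp only [h]
      field_simp
    rw [hsum, inv_div]
    field_simp
  dsimp only
  calc (weight Z y (a • p + b • q))⁻¹ ≤ h⁻¹⁻¹ := inv_anti₀ (inv_pos.2 hh) hharm
    _ = a • (weight Z y p)⁻¹ + b • (weight Z y q)⁻¹ := by simp only [inv_inv, smul_eq_mul, h]; ring

lemma isExtreme_inter_preimage_Iic_weight (hZ : Convex ℝ Z) (hpos : ∀ x ∈ Z, 0 < weight Z y x)
    {b : ℝ} (hb : ∀ x ∈ Z, b ≤ weight Z y x) : IsExtreme ℝ Z (Z ∩ weight Z y ⁻¹' Iic b) := by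
  refine ⟨inter_subset_left, fun p hp q hq x ⟨hx, hxb⟩ hxpq => ⟨hp, ?_⟩⟩
  have hqx : (weight Z y q)⁻¹ ≤ (weight Z y x)⁻¹ :=
    inv_anti₀ (hpos x hx) (hxb.trans (hb q hq))
  have hxp := (convexOn_inv_weight hZ hpos).le_left_of_right_le hp hq hxpq hqx
  exact ((inv_le_inv₀ (hpos x hx) (hpos p hp)).1 hxp).trans hxb

end Algebraic

section Topological

variable {V : Type*} [NormedAddCommGroup V] [NormedSpace ℝ V]

lemma mem_intrinsicInterior_iff_forall_add_mem {s : Set V} {c : V} :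
    c ∈ intrinsicInterior ℝ s ↔ ∃ δ > 0, ∀ v ∈ vectorSpan ℝ s, ‖v‖ < δ → c + v ∈ s := by
  rw [mem_intrinsicInterior]
  constructor
  · rintro ⟨p, hp, rfl⟩
    obtain ⟨δ, hδ, hball⟩ := Metric.mem_nhds_iff.1 (mem_interior_iff_mem_nhds.1 hp)
    refine ⟨δ, hδ, fun v hv hvδ => ?_⟩
    have hpv : (p : V) + v ∈ affineSpan ℝ s := by
      rw [add_comm, ← vadd_eq_add]
      exact AffineSubspace.vadd_mem_of_mem_direction ((direction_affineSpan ℝ s).symm ▸ hv) p.2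
    refine hball (a := ⟨_, hpv⟩) ?_
    rwa [Metric.mem_ball, Subtype.dist_eq, dist_eq_norm, add_sub_cancel_left]
  · rintro ⟨δ, hδ, hball⟩
    have hc : c ∈ s := by simpa using hball 0 (Submodule.zero_mem _) (by simpa using hδ)
    refine ⟨⟨c, subset_affineSpan ℝ s hc⟩, ?_, rfl⟩
    refine mem_interior_iff_mem_nhds.2 (Metric.mem_nhds_iff.2 ⟨δ, hδ, fun q hq => ?_⟩)
    have hqc : (q : V) - c ∈ vectorSpan ℝ s := by
      rw [← direction_affineSpan, ← vsub_eq_sub]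
      exact AffineSubspace.vsub_mem_direction q.2 (subset_affineSpan ℝ s hc)
    rw [Metric.mem_ball, Subtype.dist_eq, dist_eq_norm] at hq
    simpa using hball _ hqc hq

theorem Convex.combo_intrinsicInterior_self_mem_intrinsicInterior {s : Set V} (hs : Convex ℝ s)
    {x z : V} (hx : x ∈ intrinsicInterior ℝ s) (hz : z ∈ s) {a b : ℝ} (ha : 0 < a) (hb : 0 ≤ b)
    (hab : a + b = 1) : a • x + b • z ∈ intrinsicInterior ℝ s := by
  obtain ⟨δ, hδ, hball⟩ := mem_intrinsicInterior_iff_forall_add_mem.1 hx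
  refine mem_intrinsicInterior_iff_forall_add_mem.2 ⟨a * δ, by positivity, fun v hv hvδ => ?_⟩
  have hv' : ‖a⁻¹ • v‖ < δ := by
    rwa [norm_smul, Real.norm_of_nonneg (inv_nonneg.2 ha.le), inv_mul_lt_iff₀ ha]
  have hcombo : a • x + b • z + v = a • (x + a⁻¹ • v) + b • z := by
    rw [smul_add, smul_inv_smul₀ ha.ne']
    abel
  rw [hcombo]
  exact hs (hball _ (Submodule.smul_mem _ _ hv) hv') hz ha.le hb hab

variable {Z : Set V} {y : V}

lemma mem_intrinsicInterior_of_forall_weight_pos [FiniteDimensional ℝ V] (hZ : Convex ℝ Z)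
    (hy : y ∈ Z) (hpos : ∀ x ∈ Z, 0 < weight Z y x) : y ∈ intrinsicInterior ℝ Z := by
  obtain ⟨c, hc⟩ := Set.Nonempty.intrinsicInterior hZ ⟨y, hy⟩
  obtain ⟨t, ⟨-, ht1, hz⟩, ht⟩ :=
    exists_lt_of_lt_csSup ⟨0, zero_mem_weightSet hy c⟩ (hpos c (intrinsicInterior_subset hc))
  have hcombo : y = t • c + (1 - t) • ((1 - t)⁻¹ • (y - t • c)) := by
    rw [smul_inv_smul₀ (by linarith)]
    abel
  rw [hcombo]
  exact hZ.combo_intrinsicInterior_self_mem_intrinsicInterior hc hz ht (by linarith) (by ring)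

lemma smul_sub_mem_intrinsicInterior_of_lt_weight (hZ : Convex ℝ Z)
    (hy : y ∈ intrinsicInterior ℝ Z) {x : V} (hx : x ∈ Z) {t : ℝ} (ht : 0 ≤ t)
    (htw : t < weight Z y x) : (1 - t)⁻¹ • (y - t • x) ∈ intrinsicInterior ℝ Z := by
  obtain ⟨s, hts, hsw⟩ := exists_between htw
  obtain ⟨-, hs1, hsZ⟩ := mem_weightSet_of_lt_weight hZ hx (by linarith) hsw
  have h1t : 1 - t ≠ 0 := by linarith
  have h1s : 1 - s ≠ 0 := by linarith
  have hs : s ≠ 0 := by linarith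
  have hcombo : (1 - t)⁻¹ • (y - t • x) = ((s - t) / (s * (1 - t))) • y
      + (1 - (s - t) / (s * (1 - t))) • ((1 - s)⁻¹ • (y - s • x)) := by
    match_scalars <;> (field_simp; ring)
  rw [hcombo]
  refine hZ.combo_intrinsicInterior_self_mem_intrinsicInterior hy hsZ ?_ ?_ (by ring)
  · exact div_pos (by linarith) (mul_pos (by linarith) (by linarith))
  · rw [sub_nonneg, div_le_one (mul_pos (by linarith) (by linarith))]
    nlinarith

lemma lowerSemicontinuousOn_weight (hZ : Convex ℝ Z) (hy : y ∈ intrinsicInterior ℝ Z) :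
    LowerSemicontinuousOn (weight Z y) Z := by
  intro x₀ hx₀ t₀ ht₀
  rcases lt_or_ge t₀ 0 with ht₀neg | ht₀nonneg
  · exact Filter.Eventually.of_forall fun x =>
      ht₀neg.trans_le (weight_nonneg (intrinsicInterior_subset hy) x)
  obtain ⟨t, ht₀t, htw⟩ := exists_between ht₀
  have ht : 0 < t := by linarith
  have ht1 : t < 1 := (mem_weightSet_of_lt_weight hZ hx₀ ht.le htw).2.1
  obtain ⟨δ, hδ, hball⟩ := mem_intrinsicInterior_iff_forall_add_mem.1
    (smul_sub_mem_intrinsicInterior_of_lt_weight hZ hy hx₀ ht.le htw)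
  have hr : 0 < δ * (1 - t) / t := div_pos (mul_pos hδ (by linarith)) ht
  filter_upwards [self_mem_nhdsWithin, nhdsWithin_le_nhds (Metric.ball_mem_nhds x₀ hr)]
    with x hx hxx₀
  refine ht₀t.trans_le (le_weight_of_mem_weightSet ⟨ht.le, ht1, ?_⟩)
  have hv : (1 - t)⁻¹ • (y - t • x) = (1 - t)⁻¹ • (y - t • x₀) + (t / (1 - t)) • (x₀ - x) := by
    rw [div_eq_inv_mul, mul_smul, ← smul_add]
    module
  rw [hv]
  refine hball _ (Submodule.smul_mem _ _ (vsub_mem_vectorSpan ℝ hx₀ hx)) ?_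
  rw [Metric.mem_ball, dist_eq_norm, lt_div_iff₀ ht] at hxx₀
  rw [norm_smul, norm_sub_rev, Real.norm_of_nonneg (div_nonneg ht.le (by linarith)),
    div_mul_eq_mul_div, div_lt_iff₀ (by linarith)]
  linarith

end Topological

theorem bdness_attained_at_extreme_point {n : ℕ}
    (Z : Set (EuclideanSpace ℝ (Fin n))) (hconv : Convex ℝ Z) (hcomp : IsCompact Z)
    (y : EuclideanSpace ℝ (Fin n)) (hy : y ∈ Z)
    (hinner : ∀ x ∈ Z, weight Z y x ≠ 0) :
    ∃ x ∈ Set.extremePoints ℝ Z, bdness Z y = weight Z y x := by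
  have hpos : ∀ x ∈ Z, 0 < weight Z y x := fun x hx =>
    (weight_nonneg hy x).lt_of_ne' (hinner x hx)
  have hlsc := lowerSemicontinuousOn_weight hconv
    (mem_intrinsicInterior_of_forall_weight_pos hconv hy hpos)
  obtain ⟨x₀, hx₀, hmin⟩ := hlsc.exists_isMinOn ⟨y, hy⟩ hcomp
  rw [isMinOn_iff] at hmin
  have hMcomp := hlsc.isCompact_inter_preimage_Iic hcomp (weight Z y x₀)
  obtain ⟨e, he⟩ := hMcomp.extremePoints_nonempty ⟨x₀, hx₀, le_refl (weight Z y x₀)⟩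
  obtain ⟨heZ, hex₀⟩ := extremePoints_subset he
  have hext := isExtreme_inter_preimage_Iic_weight hconv hpos hmin
  refine ⟨e, hext.extremePoints_subset_extremePoints he, ?_⟩
  have hwe : weight Z y e = weight Z y x₀ := le_antisymm hex₀ (hmin e heZ)
  refine IsLeast.csInf_eq ⟨mem_image_of_mem _ heZ, ?_⟩
  rintro _ ⟨x, hx, rfl⟩
  exact hwe ▸ hmin x hx
end

section
/- Let Z be a convex set, y ∈ Z \ ∂Z, and let p_y(x) = P_{Z-y}(y - x) be the Minkowski gauge of Z - y (on the linear hull of Z - y) evaluated at y - x. Then for all x ∈ Z, t_y(x) = 1/(1 + p_y(x)). -/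
open Set

theorem Set.mem_image_sub_const_iff {G : Type*} [AddGroup G] {s : Set G} {a v : G} :
    v ∈ (fun z => z - a) '' s ↔ v + a ∈ s :=
  ⟨by rintro ⟨z, hz, rfl⟩; simpa using hz, fun h => ⟨v + a, h, add_sub_cancel_right v a⟩⟩

theorem le_one_div_one_add_iff {t g : ℝ} (ht : 0 < t) (hg : 0 ≤ g) :
    t ≤ 1 / (1 + g) ↔ g ≤ (t / (1 - t))⁻¹ := by
  rw [inv_div, le_div_iff₀ (by linarith), le_div_iff₀ ht]
  constructor <;> intro <;> linarith

theorem lt_one_div_one_add_iff {t g : ℝ} (ht : 0 < t) (hg : 0 ≤ g) :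
    t < 1 / (1 + g) ↔ g < (t / (1 - t))⁻¹ := by
  rw [inv_div, lt_div_iff₀ (by linarith), lt_div_iff₀ ht]
  constructor <;> intro <;> linarith

section Gauge

variable {E : Type*} [AddCommGroup E] [Module ℝ E] {s : Set E} {x : E} {c : ℝ}

theorem gauge_le_inv_of_smul_mem (hc : 0 < c) (h : c • x ∈ s) : gauge s x ≤ c⁻¹ :=
  gauge_le_of_mem (inv_nonneg.2 hc.le) <| by
    rwa [mem_smul_set_iff_inv_smul_mem₀ (inv_ne_zero hc.ne'), inv_inv]

theorem Convex.smul_mem_of_gauge_lt_inv (hs : Convex ℝ s) (h₀ : (0 : E) ∈ s)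
    (hx : ∃ b : ℝ, 0 < b ∧ b • x ∈ s) (hc : 0 < c) (h : gauge s x < c⁻¹) : c • x ∈ s := by
  obtain ⟨b, hb, hbx⟩ := hx
  have hne : {r ∈ Ioi (0 : ℝ) | r⁻¹ • x ∈ s}.Nonempty := ⟨b⁻¹, inv_pos.2 hb, by rwa [inv_inv]⟩
  rw [gauge_def'] at h
  obtain ⟨r, ⟨hr : 0 < r, hrx⟩, hrc⟩ := exists_lt_of_csInf_lt hne h
  have hcr : c * r ∈ Icc (0 : ℝ) 1 :=
    ⟨by positivity, by simpa using ((lt_inv_mul_iff₀ hc (b := 1)).1 (by simpa using hrc)).le⟩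
  simpa [smul_smul, mul_assoc, hr.ne'] using hs.smul_mem_of_zero_mem h₀ hrx hcr

end Gauge

section Weight

variable {V : Type*} [AddCommGroup V] [Module ℝ V] {Z : Set V} {x y : V} {t : ℝ}

theorem inv_one_sub_smul_sub_smul (ht : t ≠ 1) :
    (1 - t)⁻¹ • (y - t • x) = (t / (1 - t)) • (y - x) + y := by
  have : 1 - t ≠ 0 := sub_ne_zero.2 ht.symm
  match_scalars <;> field_simp; ring

theorem inv_one_sub_smul_mem_iff (ht : t ≠ 1) :
    (1 - t)⁻¹ • (y - t • x) ∈ Z ↔ (t / (1 - t)) • (y - x) ∈ (fun z => z - y) '' Z := by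
  rw [mem_image_sub_const_iff, inv_one_sub_smul_sub_smul ht]

end Weight

theorem weight_eq_inv_one_add_gauge {V : Type*} [AddCommGroup V] [Module ℝ V]
    (Z : Set V) (hZ : Convex ℝ Z) (y : V) (hy : y ∈ Z)
    (hinner : ∀ x ∈ Z, 0 < weight Z y x)
    (x : V) (hx : x ∈ Z) :
    weight Z y x = 1 / (1 + gauge ((fun z => z - y) '' Z) (y - x)) := by
  have hA : Convex ℝ ((fun z => z - y) '' Z) := by
    convert hZ.translate (-y) using 2
    exact sub_eq_neg_add _ y
  have hA₀ : (0 : V) ∈ (fun z => z - y) '' Z := ⟨y, hy, sub_self y⟩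
  have hg := gauge_nonneg (s := (fun z => z - y) '' Z) (y - x)
  have h₀ : (0 : ℝ) ∈ {t : ℝ | 0 ≤ t ∧ t < 1 ∧ (1 - t)⁻¹ • (y - t • x) ∈ Z} :=
    ⟨le_rfl, one_pos, by simpa using hy⟩
  have hray : ∃ c : ℝ, 0 < c ∧ c • (y - x) ∈ (fun z => z - y) '' Z := by
    obtain ⟨t, ⟨-, ht1, htZ⟩, ht0⟩ := exists_lt_of_lt_csSup ⟨0, h₀⟩ (hinner x hx)
    exact ⟨_, div_pos ht0 (sub_pos.2 ht1), (inv_one_sub_smul_mem_iff ht1.ne).1 htZ⟩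
  refine csSup_eq_of_forall_le_of_forall_lt_exists_gt ⟨0, h₀⟩ ?_ fun u hu => ?_
  · rintro t ⟨ht0, ht1, htZ⟩
    obtain rfl | ht0 := ht0.eq_or_lt
    · positivity
    rw [le_one_div_one_add_iff ht0 hg]
    exact gauge_le_inv_of_smul_mem (div_pos ht0 (sub_pos.2 ht1))
      ((inv_one_sub_smul_mem_iff ht1.ne).1 htZ)
  · obtain ⟨t, hut, htb⟩ := exists_between (max_lt hu (by positivity))
    have ht0 : 0 < t := (le_max_right _ _).trans_lt hut
    have ht1 : t < 1 := htb.trans_le (div_le_one_of_le₀ (by linarith) (by linarith))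
    refine ⟨t, ⟨ht0.le, ht1, (inv_one_sub_smul_mem_iff ht1.ne).2 ?_⟩, (le_max_left _ _).trans_lt hut⟩
    exact hA.smul_mem_of_gauge_lt_inv hA₀ hray (div_pos ht0 (sub_pos.2 ht1))
      ((lt_one_div_one_add_iff ht0 hg).1 htb)
end

section
/- Let Z be a base of a pointed generating cone C in a real vector space V, and suppose x, y ∈ Z and t ∈ [0,1) are such that y - t·x ∈ C. Then y - t·x = (1-t)·z for some z ∈ Z, i.e., the unique scaling factor of y - t·x with respect to the base Z is exactly 1 - t. -/
open Pointwise

/-!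
Write `y - t • x = α • z` with `z ∈ Z`. Then `y = α • z + t • x = (α + t) • u` for a convex
combination `u ∈ Z` of `z` and `x`, and since `y = 1 • y` is another such representation,
uniqueness of the scaling factor forces `α + t = 1`. The degenerate cases are `y = 0`, where
pointedness makes `y - t • x = 0`, and `y - t • x = 0 ≠ y`, where the same uniqueness would
give `t = 1`.
-/

section

variable {V : Type*} [AddCommGroup V] [Module ℝ V] {C Z : Set V}

theorem scale_eq_one_of_base
    (hbase : ∀ v ∈ C, v ≠ (0 : V) → ∃! p : ℝ × V, 0 < p.1 ∧ p.2 ∈ Z ∧ v = p.1 • p.2)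
    (hZC : Z ⊆ C) {y u : V} {s : ℝ} (hy : y ∈ Z) (hy0 : y ≠ 0) (hu : u ∈ Z) (hs : 0 < s)
    (h : y = s • u) : s = 1 :=
  congrArg Prod.fst <|
    (hbase y (hZC hy) hy0).unique (y₁ := (s, u)) (y₂ := (1, y)) ⟨hs, hu, h⟩
      ⟨one_pos, hy, (one_smul ℝ y).symm⟩

theorem Convex.exists_add_smul_eq {a b : ℝ} {u w : V} (hZ : Convex ℝ Z) (ha : 0 ≤ a) (hb : 0 ≤ b)
    (hu : u ∈ Z) (hw : w ∈ Z) : ∃ v ∈ Z, a • u + b • w = (a + b) • v := by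
  obtain ⟨v, hv, hv_eq⟩ : a • u + b • w ∈ (a + b) • Z := by
    rw [hZ.add_smul ha hb]
    exact Set.add_mem_add (Set.smul_mem_smul_set hu) (Set.smul_mem_smul_set hw)
  exact ⟨v, hv, hv_eq.symm⟩

end

theorem base_scaling_factor_general {V : Type*} [AddCommGroup V] [Module ℝ V]
    (C Z : Set V)
    (hCscale : ∀ v ∈ C, ∀ α : ℝ, 0 ≤ α → α • v ∈ C)
    (hpointed : C ∩ (-C) = {0})
    (hZC : Z ⊆ C) (hZconv : Convex ℝ Z)
    (hbase : ∀ v ∈ C, v ≠ (0 : V) → ∃! p : ℝ × V, 0 < p.1 ∧ p.2 ∈ Z ∧ v = p.1 • p.2)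
    (x y : V) (hx : x ∈ Z) (hy : y ∈ Z)
    (t : ℝ) (ht0 : 0 ≤ t) (ht1 : t < 1) (hmem : y - t • x ∈ C) :
    ∃ z ∈ Z, y - t • x = (1 - t) • z := by
  by_cases hy0 : y = 0
  · subst hy0
    have hneg : -(t • x) ∈ C ∩ -C :=
      ⟨by simpa using hmem, by simpa using hCscale x (hZC hx) t ht0⟩
    rw [hpointed, Set.mem_singleton_iff] at hneg
    exact ⟨0, hy, by simpa using hneg⟩
  by_cases hw0 : y - t • x = 0
  · have hyx : y = t • x := sub_eq_zero.mp hw0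
    have ht : 0 < t := ht0.lt_of_ne <| by rintro rfl; simp [hyx] at hy0
    exact absurd (scale_eq_one_of_base hbase hZC hy hy0 hx ht hyx) ht1.ne
  obtain ⟨⟨α, z⟩, ⟨hα, hz, hw⟩, -⟩ := hbase _ hmem hw0
  obtain ⟨u, hu, hyu⟩ := hZconv.exists_add_smul_eq hα.le ht0 hz hx
  have hαt : α + t = 1 :=
    scale_eq_one_of_base hbase hZC hy hy0 hu (by linarith) (by rw [← hyu, ← hw]; abel)
  exact ⟨z, hz, by rw [hw, ← hαt, add_sub_cancel_right]⟩

theorem base_scaling_factor {V : Type*} [AddCommGroup V] [Module ℝ V]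
    (C Z : Set V)
    (hCconv : Convex ℝ C) (hCscale : ∀ v ∈ C, ∀ α : ℝ, 0 ≤ α → α • v ∈ C)
    (hpointed : C ∩ (-C) = {0})
    (hgen : ∀ v : V, ∃ a ∈ C, ∃ b ∈ C, v = a - b)
    (hZC : Z ⊆ C) (hZconv : Convex ℝ Z)
    (hbase : ∀ v ∈ C, v ≠ (0 : V) → ∃! p : ℝ × V, 0 < p.1 ∧ p.2 ∈ Z ∧ v = p.1 • p.2)
    (x y : V) (hx : x ∈ Z) (hy : y ∈ Z)
    (t : ℝ) (ht0 : 0 ≤ t) (ht1 : t < 1) (hmem : y - t • x ∈ C) :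
    ∃ z ∈ Z, y - t • x = (1 - t) • z :=
  base_scaling_factor_general C Z hCscale hpointed hZC hZconv hbase x y hx hy t ht0 ht1 hmem
end

section
/- The boundariness of an n-outcome observable C = (C₁,…,C_n) on a finite-dimensional Hilbert space equals λ_min, the minimal eigenvalue among all the effects C₁,…,C_n: b(C) = min_{j} λ_min(C_j). -/
/-!
For any POVM `A` and `0 ≤ t ≤ λ`, where `λ • 1 ≤ C j` for all `j`, we have
`C j - t • A j ≥ t • (1 - A j) ≥ 0`, so `(C - t • A) / (1 - t)` is again a POVM and every
weight is at least `λ`. Conversely, already the deterministic POVM `Pi.single k 1` has weight at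
most `λ_min (C k)`: the `k`-th effect of `(C - t • A) / (1 - t)` is `(C k - t • 1) / (1 - t)`,
which is positive semidefinite only if `t ≤ λ_min (C k)`.
-/

open Matrix
open scoped ComplexOrder

/-- The convex set of `n`-outcome POVMs on a `d`-dimensional system. -/
def POVMs (d n : ℕ) : Set (Fin n → Matrix (Fin d) (Fin d) ℂ) :=
  {A | (∀ j, (A j).PosSemidef) ∧ ∑ j, A j = 1}

section Weight

variable {V : Type*} [AddCommGroup V] [Module ℝ V] {Z : Set V} {y x : V} {s : ℝ}

lemma weight_le (hy : y ∈ Z)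
    (h : ∀ t, 0 ≤ t → t < 1 → (1 - t)⁻¹ • (y - t • x) ∈ Z → t ≤ s) : weight Z y x ≤ s :=
  csSup_le ⟨0, le_rfl, zero_lt_one, by simpa using hy⟩ fun t ⟨ht0, ht1, ht⟩ => h t ht0 ht1 ht

lemma le_weight (hy : y ∈ Z) (hs : s ≤ 1)
    (h : ∀ t, 0 ≤ t → t < s → (1 - t)⁻¹ • (y - t • x) ∈ Z) : s ≤ weight Z y x := by
  have hbdd : BddAbove {t : ℝ | 0 ≤ t ∧ t < 1 ∧ (1 - t)⁻¹ • (y - t • x) ∈ Z} :=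
    ⟨1, fun t ht => ht.2.1.le⟩
  refine le_of_forall_lt_imp_le_of_dense fun t hts => ?_
  rcases lt_or_ge t 0 with ht0 | ht0
  · exact ht0.le.trans (le_csSup hbdd ⟨le_rfl, zero_lt_one, by simpa using hy⟩)
  · exact le_csSup hbdd ⟨ht0, hts.trans_le hs, h t ht0 hts⟩

lemma bdness_eq (h_le : ∀ x ∈ Z, s ≤ weight Z y x) (h_exists : ∃ x ∈ Z, weight Z y x ≤ s) :
    bdness Z y = s := by
  obtain ⟨x₀, hx₀, hle⟩ := h_exists
  refine IsGLB.csInf_eq ⟨?_, fun b hb => (hb ⟨x₀, hx₀, rfl⟩).trans hle⟩ ⟨_, x₀, hx₀, rfl⟩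
  rintro _ ⟨x, hx, rfl⟩
  exact h_le x hx

end Weight

open scoped MatrixOrder

namespace Matrix.IsHermitian

variable {m 𝕜 : Type*} [Fintype m] [DecidableEq m] [RCLike 𝕜] {M : Matrix m m 𝕜}

lemma smul_one_le_iff (hM : M.IsHermitian) {t : ℝ} :
    t • (1 : Matrix m m 𝕜) ≤ M ↔ ∀ i, t ≤ hM.eigenvalues i := by
  rw [← Algebra.algebraMap_eq_smul_one, algebraMap_le_iff_le_spectrum hM.isSelfAdjoint,
    hM.spectrum_real_eq_range_eigenvalues, Set.forall_mem_range]

lemma le_one_iff (hM : M.IsHermitian) : M ≤ 1 ↔ ∀ i, hM.eigenvalues i ≤ 1 := by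
  rw [← map_one (algebraMap ℝ (Matrix m m 𝕜)), le_algebraMap_iff_spectrum_le hM.isSelfAdjoint,
    hM.spectrum_real_eq_range_eigenvalues, Set.forall_mem_range]

end Matrix.IsHermitian

section POVM

variable {d n : ℕ} {C A : Fin n → Matrix (Fin d) (Fin d) ℂ}

lemma le_one_of_mem_POVMs (hA : A ∈ POVMs d n) (j : Fin n) : A j ≤ 1 :=
  hA.2 ▸ Finset.single_le_sum (fun i _ => (hA.1 i).nonneg) (Finset.mem_univ j)

lemma single_one_mem_POVMs (k : Fin n) : Pi.single k 1 ∈ POVMs d n := by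
  refine ⟨fun j => ?_, by simp⟩
  rcases eq_or_ne j k with rfl | hj
  · simpa using PosSemidef.one
  · simpa [hj] using PosSemidef.zero

lemma smul_sub_smul_mem_POVMs (hC : C ∈ POVMs d n) (hA : A ∈ POVMs d n) {t : ℝ}
    (ht0 : 0 ≤ t) (ht1 : t < 1) (htC : ∀ j, t • 1 ≤ C j) :
    (1 - t)⁻¹ • (C - t • A) ∈ POVMs d n := by
  refine ⟨fun j => PosSemidef.smul ?_ (inv_nonneg.2 (sub_nonneg.2 ht1.le)), ?_⟩
  · have htA : t • A j ≤ C j :=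
      (smul_le_smul_of_nonneg_left (le_one_of_mem_POVMs hA j) ht0).trans (htC j)
    exact (sub_nonneg.2 htA).posSemidef
  · have hone : (1 : Matrix (Fin d) (Fin d) ℂ) - t • 1 = (1 - t) • 1 := by
      rw [sub_smul, one_smul]
    simp only [Pi.smul_apply, Pi.sub_apply]
    rw [← Finset.smul_sum, Finset.sum_sub_distrib, ← Finset.smul_sum, hC.2, hA.2, hone,
      smul_smul, inv_mul_cancel₀ (sub_ne_zero.2 ht1.ne'), one_smul]

lemma weight_single_one_le (hC : C ∈ POVMs d n) (k : Fin n) (hCk : (C k).IsHermitian)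
    (i : Fin d) : weight (POVMs d n) C (Pi.single k 1) ≤ hCk.eigenvalues i := by
  refine weight_le hC fun t ht0 ht1 ht => ?_
  have hscaled : 0 ≤ (1 - t) • (1 - t)⁻¹ • (C k - t • 1) := by
    simpa using smul_nonneg (sub_nonneg.2 ht1.le) (ht.1 k).nonneg
  rw [smul_smul, mul_inv_cancel₀ (sub_ne_zero.2 ht1.ne'), one_smul, sub_nonneg] at hscaled
  exact hCk.smul_one_le_iff.1 hscaled i

lemma le_weight_of_smul_one_le (hC : C ∈ POVMs d n) {s : ℝ} (hs : s ≤ 1)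
    (hsC : ∀ j, s • 1 ≤ C j) (hA : A ∈ POVMs d n) : s ≤ weight (POVMs d n) C A :=
  le_weight hC hs fun _ ht0 hts =>
    smul_sub_smul_mem_POVMs hC hA ht0 (hts.trans_le hs) fun j =>
      (smul_le_smul_of_nonneg_right hts.le zero_le_one).trans (hsC j)

end POVM

theorem bdness_povm_eq_min_eigenvalue {d n : ℕ} [NeZero d] [NeZero n]
    (C : Fin n → Matrix (Fin d) (Fin d) ℂ)
    (hpos : ∀ j, (C j).PosSemidef) (hsum : ∑ j, C j = 1) :
    bdness (POVMs d n) C = ⨅ j, ⨅ i, (hpos j).isHermitian.eigenvalues i := by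
  have hC : C ∈ POVMs d n := ⟨hpos, hsum⟩
  set lam := ⨅ j, ⨅ i, (hpos j).isHermitian.eigenvalues i
  have hlam : ∀ j i, lam ≤ (hpos j).isHermitian.eigenvalues i := fun j i =>
    (ciInf_le (Finite.bddBelow_range _) j).trans (ciInf_le (Finite.bddBelow_range _) i)
  obtain ⟨k, hk⟩ :=
    exists_eq_ciInf_of_finite (f := fun j => ⨅ i, (hpos j).isHermitian.eigenvalues i)
  obtain ⟨i, hi⟩ := exists_eq_ciInf_of_finite (f := (hpos k).isHermitian.eigenvalues)
  refine bdness_eq (fun A hA => le_weight_of_smul_one_le hC ?_ ?_ hA)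
    ⟨Pi.single k 1, single_one_mem_POVMs k, ?_⟩
  · exact (hlam k i).trans (((hpos k).isHermitian.le_one_iff.1 (le_one_of_mem_POVMs hC k)) i)
  · exact fun j => (hpos j).isHermitian.smul_one_le_iff.2 (hlam j)
  · exact (weight_single_one_le hC k _ i).trans_eq (hi.trans hk)
end

section
/- For the qubit erasure channel E_p (mapping every input state to ξ_p = p|0⟩⟨0| + (1-p)|1⟩⟨1| with 0 < p < 1/2) and for every unitary qubit channel F with Choi operator F = |U⟩⟩⟨⟨U|, the weight function of the set of qubit channels satisfies t_{E_p}(F) = p(1-p); namely, E_p - t·|U⟩⟩⟨⟨U| is positive semidefinite exactly when t ≤ p(1-p). -/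
open Matrix
open scoped ComplexOrder Kronecker

/-- The set of Choi operators of qubit channels: positive operators `E` on `ℂ²⊗ℂ²`
with partial trace over the first (output) factor equal to `I/2`. -/
def QubitChoi : Set (Matrix (Fin 2 × Fin 2) (Fin 2 × Fin 2) ℂ) :=
  {E | E.PosSemidef ∧ ∀ i j : Fin 2,
    ∑ k : Fin 2, E (k, i) (k, j) = if i = j then (2 : ℂ)⁻¹ else 0}

/-- The Choi operator `E_p = ξ_p ⊗ I/2` of the qubit erasure channel with output
state `ξ_p = diag(p, 1-p)`. -/
noncomputable def erasureChoi (p : ℝ) : Matrix (Fin 2 × Fin 2) (Fin 2 × Fin 2) ℂ :=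
  (Matrix.diagonal ![(p : ℂ), 1 - (p : ℂ)]) ⊗ₖ ((2 : ℂ)⁻¹ • (1 : Matrix (Fin 2) (Fin 2) ℂ))

/-- The maximally entangled vector `|U⟩⟩ = (U ⊗ I)|ψ₊⟩` associated with a matrix `U`. -/
noncomputable def uVec (U : Matrix (Fin 2) (Fin 2) ℂ) : Fin 2 × Fin 2 → ℂ :=
  fun q => (Real.sqrt 2 : ℂ)⁻¹ * U q.1 q.2

/-- The Choi operator `|U⟩⟩⟨⟨U|` of the unitary channel `ρ ↦ UρU†`. -/
noncomputable def unitaryChoi (U : Matrix (Fin 2) (Fin 2) ℂ) :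
    Matrix (Fin 2 × Fin 2) (Fin 2 × Fin 2) ℂ :=
  Matrix.vecMulVec (uVec U) (star (uVec U))

noncomputable def dfun (p : ℝ) : Fin 2 × Fin 2 → ℝ :=
  fun q => if q.1 = 0 then p / 2 else (1 - p) / 2

lemma erasure_eq (p : ℝ) :
    erasureChoi p = Matrix.diagonal (fun q => (dfun p q : ℂ)) := by
  ext ⟨i, j⟩ ⟨k, l⟩
  fin_cases i <;> fin_cases j <;> fin_cases k <;> fin_cases l <;>
    simp [erasureChoi, dfun, Matrix.one_apply, Matrix.diagonal, Prod.ext_iff] <;> push_cast <;> ring_nf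

lemma quadform (p t : ℝ) (U : Matrix (Fin 2) (Fin 2) ℂ) (x : Fin 2 × Fin 2 → ℂ) :
    star x ⬝ᵥ ((erasureChoi p - t • unitaryChoi U) *ᵥ x)
    = ((∑ q, dfun p q * ‖x q‖ ^ 2 : ℝ) : ℂ)
      - (t : ℂ) * ((‖∑ q, (starRingEnd ℂ) (uVec U q) * x q‖ ^ 2 : ℝ) : ℂ) := by
  set v := uVec U
  set c := ∑ q, (starRingEnd ℂ) (v q) * x q with hc
  rw [erasure_eq, Matrix.sub_mulVec, dotProduct_sub, Matrix.smul_mulVec,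
    dotProduct_smul]
  congr 1
  · rw [Complex.ofReal_sum]
    simp only [dotProduct, Matrix.mulVec_diagonal, Pi.star_apply]
    refine Finset.sum_congr rfl fun q _ => ?_
    rw [Complex.ofReal_mul,
      show star (x q) * ((dfun p q : ℂ) * x q) = (dfun p q : ℂ) * (star (x q) * x q) by ring]
    congr 1
    simpa using RCLike.conj_mul (x q)
  · have key : star x ⬝ᵥ (Matrix.vecMulVec v (star v) *ᵥ x) = (starRingEnd ℂ) c * c := by
      calc star x ⬝ᵥ (Matrix.vecMulVec v (star v) *ᵥ x)
          = ∑ i, ∑ j, star (x i) * (v i * star (v j) * x j) := by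
            simp [dotProduct, Matrix.mulVec, Matrix.vecMulVec_apply, Finset.mul_sum]
        _ = (∑ i, v i * star (x i)) * (∑ j, star (v j) * x j) := by
            rw [Finset.sum_mul_sum]
            exact Finset.sum_congr rfl fun i _ => Finset.sum_congr rfl fun j _ => by ring
        _ = (starRingEnd ℂ) c * c := by
            congr 1
            rw [hc, map_sum]
            exact Finset.sum_congr rfl fun q _ => by simp [mul_comm]
    rw [unitaryChoi, key, Complex.real_smul, RCLike.conj_mul]
    push_cast
    norm_num [RCLike.ofReal_alg]

lemma uVec_norm_sq (U : Matrix (Fin 2) (Fin 2) ℂ) (q : Fin 2 × Fin 2) :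
    ‖uVec U q‖ ^ 2 = ‖U q.1 q.2‖ ^ 2 / 2 := by
  rw [uVec, norm_mul]
  rw [show ‖((Real.sqrt 2 : ℝ) : ℂ)⁻¹‖ = (Real.sqrt 2)⁻¹ by
    rw [norm_inv, Complex.norm_real, Real.norm_eq_abs,
      abs_of_nonneg (Real.sqrt_nonneg 2)]]
  rw [mul_pow, inv_pow, Real.sq_sqrt (by norm_num)]
  ring

lemma rowsum (U : Matrix (Fin 2) (Fin 2) ℂ) (hU1 : U * Uᴴ = 1) (i : Fin 2) :
    ∑ j, ‖U i j‖ ^ 2 = 1 := by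
  have h := congrFun (congrFun hU1 i) i
  simp only [Matrix.mul_apply, Matrix.conjTranspose_apply, Matrix.one_apply_eq] at h
  have h2 : ((∑ j, ‖U i j‖ ^ 2 : ℝ) : ℂ) = 1 := by
    rw [Complex.ofReal_sum, ← h]
    exact Finset.sum_congr rfl fun j _ => by
      rw [RCLike.star_def, Complex.mul_conj, Complex.normSq_eq_norm_sq]
  exact_mod_cast h2

lemma Ssum (p : ℝ) (hp0 : 0 < p) (hp : p < 1/2) (U : Matrix (Fin 2) (Fin 2) ℂ)
    (hU1 : U * Uᴴ = 1) :
    ∑ q, ‖uVec U q‖ ^ 2 / dfun p q = (p * (1 - p))⁻¹ := by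
  have hp1 : (1 : ℝ) - p > 0 := by linarith
  rw [Fintype.sum_prod_type]
  have h0 := rowsum U hU1 0
  have h1 := rowsum U hU1 1
  rw [Fin.sum_univ_two] at h0 h1 ⊢
  rw [Fin.sum_univ_two, Fin.sum_univ_two]
  simp only [uVec_norm_sq, dfun]
  norm_num
  field_simp
  linear_combination (1 - p) * h0 + p * h1

lemma dfun_pos (p : ℝ) (hp0 : 0 < p) (hp : p < 1/2) (q : Fin 2 × Fin 2) :
    0 < dfun p q := by
  dsimp [dfun]; split <;> linarith

lemma herm (p t : ℝ) (U : Matrix (Fin 2) (Fin 2) ℂ) :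
    (erasureChoi p - t • unitaryChoi U).IsHermitian := by
  have h1 : (erasureChoi p).IsHermitian := by
    rw [erasure_eq]
    unfold Matrix.IsHermitian
    rw [Matrix.diagonal_conjTranspose]
    refine congrArg Matrix.diagonal (funext fun q => ?_)
    rw [Pi.star_apply]
    exact Complex.conj_ofReal _
  have h2 : (unitaryChoi U).IsHermitian := by
    unfold Matrix.IsHermitian unitaryChoi
    ext i j
    simp [Matrix.conjTranspose_apply, Matrix.vecMulVec_apply, mul_comm]
  have h3 : (t • unitaryChoi U).IsHermitian := by
    unfold Matrix.IsHermitian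
    ext i j
    simp only [Matrix.conjTranspose_apply, Matrix.smul_apply, star_smul, star_trivial]
    rw [← Matrix.conjTranspose_apply, h2]
  exact h1.sub h3

lemma cauchy_schwarz_aux (p : ℝ) (hp0 : 0 < p) (hp : p < 1/2)
    (U : Matrix (Fin 2) (Fin 2) ℂ) (x : Fin 2 × Fin 2 → ℂ) :
    ‖∑ q, (starRingEnd ℂ) (uVec U q) * x q‖ ^ 2
      ≤ (∑ q, ‖uVec U q‖ ^ 2 / dfun p q) * (∑ q, dfun p q * ‖x q‖ ^ 2) := by
  set v := uVec U
  have hd := dfun_pos p hp0 hp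
  set a : EuclideanSpace ℂ (Fin 2 × Fin 2) := WithLp.toLp 2 (fun q => v q / ((Real.sqrt (dfun p q) : ℝ) : ℂ))
  set b : EuclideanSpace ℂ (Fin 2 × Fin 2) := WithLp.toLp 2 (fun q => ((Real.sqrt (dfun p q) : ℝ) : ℂ) * x q)
  have hsq : ∀ q, ((Real.sqrt (dfun p q) : ℝ) : ℂ) ≠ 0 := fun q => by
    simp [Real.sqrt_ne_zero'.2 (hd q)]
  have hinner : (inner ℂ a b : ℂ) = ∑ q, (starRingEnd ℂ) (v q) * x q := by
    rw [PiLp.inner_apply]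
    refine Finset.sum_congr rfl fun q _ => ?_
    simp only [RCLike.inner_apply, a, b, PiLp.toLp_apply]
    rw [map_div₀, Complex.conj_ofReal, mul_comm, div_mul_eq_mul_div, mul_div_assoc]
    rw [show ((Real.sqrt (dfun p q) : ℝ) : ℂ) * x q / ((Real.sqrt (dfun p q) : ℝ) : ℂ) = x q from by
      rw [mul_comm, mul_div_assoc, div_self (hsq q), mul_one]]
  have hna : ‖a‖ ^ 2 = ∑ q, ‖v q‖ ^ 2 / dfun p q := by
    rw [EuclideanSpace.norm_eq, Real.sq_sqrt (Finset.sum_nonneg fun q _ => sq_nonneg _)]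
    refine Finset.sum_congr rfl fun q _ => ?_
    simp only [a, PiLp.toLp_apply, norm_div, Complex.norm_real, Real.norm_eq_abs,
      abs_of_nonneg (Real.sqrt_nonneg _)]
    rw [div_pow, Real.sq_sqrt (hd q).le]
  have hnb : ‖b‖ ^ 2 = ∑ q, dfun p q * ‖x q‖ ^ 2 := by
    rw [EuclideanSpace.norm_eq, Real.sq_sqrt (Finset.sum_nonneg fun q _ => sq_nonneg _)]
    refine Finset.sum_congr rfl fun q _ => ?_
    simp only [b, PiLp.toLp_apply, norm_mul, Complex.norm_real, Real.norm_eq_abs,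
      abs_of_nonneg (Real.sqrt_nonneg _)]
    rw [mul_pow, Real.sq_sqrt (hd q).le]
  calc ‖∑ q, (starRingEnd ℂ) (v q) * x q‖ ^ 2 = ‖(inner ℂ a b : ℂ)‖ ^ 2 := by rw [hinner]
    _ ≤ (‖a‖ * ‖b‖) ^ 2 := by
        have := norm_inner_le_norm (𝕜 := ℂ) a b
        exact pow_le_pow_left₀ (norm_nonneg _) this 2
    _ = ‖a‖ ^ 2 * ‖b‖ ^ 2 := by ring
    _ = _ := by rw [hna, hnb]

lemma psd_iff (p t : ℝ) (hp0 : 0 < p) (hp : p < 1/2)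
    (U : Matrix (Fin 2) (Fin 2) ℂ) (hU1 : U * Uᴴ = 1) (ht0 : 0 ≤ t) :
    (erasureChoi p - t • unitaryChoi U).PosSemidef ↔ t ≤ p * (1 - p) := by
  have hp1 : (0:ℝ) < 1 - p := by linarith
  have hs : (0:ℝ) < p * (1 - p) := mul_pos hp0 hp1
  have hd := dfun_pos p hp0 hp
  set v := uVec U
  set s := p * (1 - p) with hsdef
  constructor
  · intro h
    have hx := h.dotProduct_mulVec_nonneg (fun q => v q / (dfun p q : ℂ))
    rw [quadform] at hx
    have hA : ∑ q, dfun p q * ‖v q / ((dfun p q : ℝ) : ℂ)‖ ^ 2 = s⁻¹ := by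
      rw [← Ssum p hp0 hp U hU1]
      refine Finset.sum_congr rfl fun q _ => ?_
      rw [norm_div, Complex.norm_real, Real.norm_eq_abs, abs_of_nonneg (hd q).le, div_pow]
      field_simp [(hd q).ne']
      ring
    have hC : ∑ q, (starRingEnd ℂ) (v q) * (v q / ((dfun p q : ℝ) : ℂ)) = ((s⁻¹ : ℝ) : ℂ) := by
      rw [← Ssum p hp0 hp U hU1, Complex.ofReal_sum]
      refine Finset.sum_congr rfl fun q _ => ?_
      rw [mul_div_assoc', RCLike.conj_mul]
      push_cast
      rw [div_eq_div_iff (by exact_mod_cast (hd q).ne') (by exact_mod_cast (hd q).ne')]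
      rfl
    rw [hA, hC] at hx
    have hnorm : ‖((s⁻¹ : ℝ) : ℂ)‖ ^ 2 = s⁻¹ ^ 2 := by
      rw [Complex.norm_real, Real.norm_eq_abs, abs_of_nonneg (inv_nonneg.2 hs.le)]
    rw [hnorm] at hx
    have hx' : (0:ℝ) ≤ s⁻¹ - t * s⁻¹ ^ 2 := by
      have : ((0:ℝ) : ℂ) ≤ ((s⁻¹ - t * s⁻¹ ^ 2 : ℝ) : ℂ) := by
        push_cast
        convert hx using 1
        norm_num
      exact_mod_cast this
    have key : 0 ≤ s - t := by
      have h3 : 0 ≤ (s⁻¹ - t * s⁻¹ ^ 2) * s ^ 2 := mul_nonneg hx' (sq_nonneg s)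
      calc (0:ℝ) ≤ (s⁻¹ - t * s⁻¹ ^ 2) * s ^ 2 := h3
        _ = s - t := by field_simp
    linarith
  · intro ht
    refine Matrix.PosSemidef.of_dotProduct_mulVec_nonneg (herm p t U) fun x => ?_
    rw [quadform]
    set A := ∑ q, dfun p q * ‖x q‖ ^ 2 with hAdef
    set B := ‖∑ q, (starRingEnd ℂ) (v q) * x q‖ ^ 2 with hBdef
    have hA0 : 0 ≤ A := Finset.sum_nonneg fun q _ => mul_nonneg (hd q).le (sq_nonneg _)
    have hCS : B ≤ s⁻¹ * A := by
      have := cauchy_schwarz_aux p hp0 hp U x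
      rwa [Ssum p hp0 hp U hU1] at this
    have hreal : (0:ℝ) ≤ A - t * B := by
      nlinarith [mul_le_mul_of_nonneg_left hCS ht0,
        mul_le_mul_of_nonneg_right ht (mul_nonneg (inv_nonneg.2 hs.le) hA0),
        mul_inv_cancel₀ hs.ne']
    have : ((0:ℝ) : ℂ) ≤ ((A - t * B : ℝ) : ℂ) := by exact_mod_cast hreal
    push_cast at this
    convert this using 1 <;> norm_num

lemma traceE (p : ℝ) (i j : Fin 2) :
    ∑ k, erasureChoi p (k, i) (k, j) = if i = j then (2:ℂ)⁻¹ else 0 := by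
  fin_cases i <;> fin_cases j <;>
    simp [erasure_eq, Matrix.diagonal_apply, dfun, Fin.sum_univ_two, Prod.ext_iff] <;>
    push_cast <;> ring

lemma sqrt2_inv_sq : ((Real.sqrt 2 : ℝ) : ℂ)⁻¹ * ((Real.sqrt 2 : ℝ) : ℂ)⁻¹ = (2:ℂ)⁻¹ := by
  rw [← mul_inv, ← Complex.ofReal_mul, Real.mul_self_sqrt (by norm_num)]
  norm_num

lemma traceF (U : Matrix (Fin 2) (Fin 2) ℂ) (hU2 : Uᴴ * U = 1) (i j : Fin 2) :
    ∑ k, unitaryChoi U (k, i) (k, j) = if i = j then (2:ℂ)⁻¹ else 0 := by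
  have h := congrFun (congrFun hU2 i) j
  simp only [Matrix.mul_apply, Matrix.conjTranspose_apply] at h
  have h' : ∑ k, U k i * (starRingEnd ℂ) (U k j) = if i = j then 1 else 0 := by
    have h2 := congrArg (starRingEnd ℂ) h
    rw [map_sum] at h2
    calc ∑ k, U k i * (starRingEnd ℂ) (U k j)
        = ∑ k, (starRingEnd ℂ) (star (U k i) * U k j) := by
          refine Finset.sum_congr rfl fun k _ => ?_
          simp [_root_.map_mul, mul_comm]
      _ = (starRingEnd ℂ) ((1 : Matrix (Fin 2) (Fin 2) ℂ) i j) := h2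
      _ = if i = j then 1 else 0 := by
          rw [Matrix.one_apply]; split <;> simp
  calc ∑ k, unitaryChoi U (k, i) (k, j)
      = ∑ k, (2:ℂ)⁻¹ * (U k i * (starRingEnd ℂ) (U k j)) := by
        refine Finset.sum_congr rfl fun k _ => ?_
        simp only [unitaryChoi, Matrix.vecMulVec_apply, Pi.star_apply, uVec]
        rw [star_mul', star_inv₀]
        rw [show star ((Real.sqrt 2 : ℝ) : ℂ) = ((Real.sqrt 2 : ℝ) : ℂ) from Complex.conj_ofReal _]
        rw [show star (U (k, j).1 (k, j).2) = (starRingEnd ℂ) (U k j) from rfl]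
        rw [← sqrt2_inv_sq]
        ring
    _ = (2:ℂ)⁻¹ * ∑ k, U k i * (starRingEnd ℂ) (U k j) := by rw [Finset.mul_sum]
    _ = if i = j then (2:ℂ)⁻¹ else 0 := by rw [h']; split <;> simp

lemma smul_nonneg_iff_complex (c : ℝ) (hc : 0 < c) (z : ℂ) : 0 ≤ (c:ℂ) * z ↔ 0 ≤ z := by
  rw [Complex.le_def, Complex.le_def]
  simp only [Complex.mul_re, Complex.mul_im, Complex.ofReal_re, Complex.ofReal_im,
    Complex.zero_re, Complex.zero_im, zero_mul, mul_zero, sub_zero, add_zero, zero_add]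
  constructor
  · rintro ⟨h1, h2⟩
    have hre : 0 ≤ z.re := by
      have := mul_nonneg (inv_nonneg.2 hc.le) h1
      rwa [inv_mul_cancel_left₀ hc.ne'] at this
    have him : z.im = 0 := by
      rcases mul_eq_zero.1 h2.symm with h | h
      · exact absurd h hc.ne'
      · exact h
    exact ⟨hre, him.symm⟩
  · rintro ⟨h1, h2⟩
    exact ⟨mul_nonneg hc.le h1, by rw [← h2, mul_zero]⟩

lemma smul_psd_iff (c : ℝ) (hc : 0 < c) (M : Matrix (Fin 2 × Fin 2) (Fin 2 × Fin 2) ℂ) :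
    (c • M).PosSemidef ↔ M.PosSemidef := by
  have hsm : ∀ (a : ℝ) (N : Matrix (Fin 2 × Fin 2) (Fin 2 × Fin 2) ℂ),
      N.IsHermitian → (a • N).IsHermitian := fun a N h => by
    unfold Matrix.IsHermitian at h ⊢
    ext i j
    simp only [Matrix.conjTranspose_apply, Matrix.smul_apply, star_smul, star_trivial]
    rw [← Matrix.conjTranspose_apply, h]
  have hherm : (c • M).IsHermitian ↔ M.IsHermitian := by
    constructor <;> intro h
    · have h2 := hsm c⁻¹ _ h
      rwa [smul_smul, inv_mul_cancel₀ hc.ne', one_smul] at h2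
    · exact hsm c _ h
  have hq : ∀ x, star x ⬝ᵥ ((c • M) *ᵥ x) = (c : ℂ) * (star x ⬝ᵥ (M *ᵥ x)) := fun x => by
    rw [Matrix.smul_mulVec, dotProduct_smul, Complex.real_smul]
  rw [posSemidef_iff_dotProduct_mulVec, posSemidef_iff_dotProduct_mulVec]
  constructor <;> intro ⟨h1, h2⟩
  · exact ⟨hherm.1 h1, fun x => (smul_nonneg_iff_complex c hc _).1 (by rw [← hq]; exact h2 x)⟩
  · exact ⟨hherm.2 h1, fun x => by rw [hq]; exact (smul_nonneg_iff_complex c hc _).2 (h2 x)⟩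

theorem erasure_weight_at_unitary (p : ℝ) (hp0 : 0 < p) (hp : p < 1 / 2)
    (U : Matrix (Fin 2) (Fin 2) ℂ) (hU : U * Uᴴ = 1 ∧ Uᴴ * U = 1) :
    (∀ t : ℝ, 0 ≤ t → t < 1 →
      ((erasureChoi p - t • unitaryChoi U).PosSemidef ↔ t ≤ p * (1 - p))) ∧
    weight QubitChoi (erasureChoi p) (unitaryChoi U) = p * (1 - p) := by
  obtain ⟨hU1, hU2⟩ := hU
  have hp1 : (0:ℝ) < 1 - p := by linarith
  have hs : (0:ℝ) < p * (1 - p) := mul_pos hp0 hp1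
  have hs1 : p * (1 - p) < 1 := by nlinarith
  have main : ∀ t : ℝ, 0 ≤ t → t < 1 →
      ((erasureChoi p - t • unitaryChoi U).PosSemidef ↔ t ≤ p * (1 - p)) :=
    fun t ht0 _ => psd_iff p t hp0 hp U hU1 ht0
  refine ⟨main, ?_⟩
  have htr : ∀ t : ℝ, t < 1 → ∀ i j : Fin 2,
      ∑ k : Fin 2, ((1 - t)⁻¹ • (erasureChoi p - t • unitaryChoi U)) (k, i) (k, j)
        = if i = j then (2 : ℂ)⁻¹ else 0 := by
    intro t ht1 i j
    have h1t : (1:ℝ) - t ≠ 0 := by linarith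
    simp only [Matrix.smul_apply, Matrix.sub_apply]
    rw [← Finset.smul_sum, Finset.sum_sub_distrib, ← Finset.smul_sum, traceE, traceF U hU2]
    rw [show (if i = j then (2:ℂ)⁻¹ else 0) - t • (if i = j then (2:ℂ)⁻¹ else 0)
        = (1 - t) • (if i = j then (2:ℂ)⁻¹ else 0) from by
      rw [sub_smul, one_smul]]
    rw [smul_smul, inv_mul_cancel₀ h1t, one_smul]
  have hset : {t : ℝ | 0 ≤ t ∧ t < 1 ∧
      (1 - t)⁻¹ • (erasureChoi p - t • unitaryChoi U) ∈ QubitChoi}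
      = Set.Icc 0 (p * (1 - p)) := by
    ext t
    simp only [Set.mem_setOf_eq, Set.mem_Icc]
    constructor
    · rintro ⟨ht0, ht1, hmem⟩
      refine ⟨ht0, (main t ht0 ht1).1 ?_⟩
      have hpsd := hmem.1
      exact (smul_psd_iff (1 - t)⁻¹ (inv_pos.2 (by linarith)) _).1 hpsd
    · rintro ⟨ht0, hts⟩
      have ht1 : t < 1 := lt_of_le_of_lt hts hs1
      refine ⟨ht0, ht1, ?_, htr t ht1⟩
      exact (smul_psd_iff (1 - t)⁻¹ (inv_pos.2 (by linarith)) _).2 ((main t ht0 ht1).2 hts)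
  rw [weight, hset, csSup_Icc hs.le]
end

section
/- Let E be the Choi operator of a channel on a d-dimensional system that is an inner point of the set of channels (so λ_min(E) = λ₁ > 0), with spectral decomposition E = Σ_k λ_k P_k (λ₁ < λ₂ ≤ …). Suppose the eigenspace P₁ of λ₁ contains no maximally entangled state. Then for every maximally entangled unit vector |φ⟩, writing |φ⟩ = √α|v⟩ + √(1-α)|v⊥⟩ with P₁|v⟩ = |v⟩, P₁|v⊥⟩ = 0 and α < 1, one has E - t·|φ⟩⟨φ| ≥ 0 for t = λ₁λ₂/(λ₁ + (λ₂-λ₁)α), and this t is strictly greater than λ₁. -/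
/-!
Since `E ≥ λ₁ P₁ + λ₂ (1 - P₁)`, and `|v⟩⟨v| ≤ P₁`, `|v⊥⟩⟨v⊥| ≤ 1 - P₁` (differences of
orthogonal projections), it suffices that `t |φ⟩⟨φ| ≤ λ₁ |v⟩⟨v| + λ₂ |v⊥⟩⟨v⊥|`. For
`φ = s v + u v⊥` the weighted Cauchy–Schwarz inequality
`|⟨φ, x⟩|² ≤ (s²/λ₁ + u²/λ₂) (λ₁ |⟨v, x⟩|² + λ₂ |⟨v⊥, x⟩|²)` shows this holds as soon as
`t (α/λ₁ + (1 - α)/λ₂) ≤ 1`, with equality for the given `t`; and `t > λ₁` precisely because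
`α < 1`.
-/

open Matrix
open scoped ComplexOrder MatrixOrder

theorem mul_mul_norm_smul_add_smul_sq_le {E : Type*} [SeminormedAddCommGroup E] [NormedSpace ℝ E]
    (a b : E) (s u : ℝ) {l₁ l₂ : ℝ} (h₁ : 0 ≤ l₁) (h₂ : 0 ≤ l₂) :
    l₁ * l₂ * ‖s • a + u • b‖ ^ 2 ≤
      (l₂ * s ^ 2 + l₁ * u ^ 2) * (l₁ * ‖a‖ ^ 2 + l₂ * ‖b‖ ^ 2) := by
  have htri : ‖s • a + u • b‖ ≤ |s| * ‖a‖ + |u| * ‖b‖ := by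
    simpa only [norm_smul, Real.norm_eq_abs] using norm_add_le (s • a) (u • b)
  calc l₁ * l₂ * ‖s • a + u • b‖ ^ 2 ≤ l₁ * l₂ * (|s| * ‖a‖ + |u| * ‖b‖) ^ 2 := by gcongr
    _ ≤ _ := by
      rw [← sq_abs s, ← sq_abs u]
      nlinarith [sq_nonneg (l₂ * |s| * ‖b‖ - l₁ * |u| * ‖a‖)]

namespace Matrix

variable {ι 𝕜 : Type*} [Fintype ι] [RCLike 𝕜]

theorem isStarProjection_vecMulVec_self_star {v : ι → 𝕜} (hv : star v ⬝ᵥ v = 1) :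
    IsStarProjection (vecMulVec v (star v)) where
  isIdempotentElem := by rw [IsIdempotentElem, vecMulVec_mul_vecMulVec, hv, one_smul]
  isSelfAdjoint := (posSemidef_vecMulVec_self_star v).isHermitian

theorem vecMulVec_self_star_le {P : Matrix ι ι 𝕜} (hP : IsStarProjection P) {v : ι → 𝕜}
    (hv : star v ⬝ᵥ v = 1) (hPv : P *ᵥ v = v) : vecMulVec v (star v) ≤ P :=
  sub_nonneg.1 ((isStarProjection_vecMulVec_self_star hv).sub_of_mul_eq_right hP
    (by rw [mul_vecMulVec, hPv])).nonneg

theorem dotProduct_vecMulVec_self_star_mulVec (v x : ι → 𝕜) :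
    star x ⬝ᵥ (vecMulVec v (star v) *ᵥ x) = ((‖star v ⬝ᵥ x‖ ^ 2 : ℝ) : 𝕜) := by
  rw [vecMulVec_mulVec, op_smul_eq_smul, dotProduct_smul, smul_eq_mul, star_dotProduct x v,
    RCLike.star_def, RCLike.mul_conj, RCLike.ofReal_pow]

theorem star_ofReal_smul_add_dotProduct (v w x : ι → 𝕜) (s u : ℝ) :
    star ((s : 𝕜) • v + (u : 𝕜) • w) ⬝ᵥ x = s • (star v ⬝ᵥ x) + u • (star w ⬝ᵥ x) := by
  simp only [star_add, star_smul, RCLike.star_def, RCLike.conj_ofReal, add_dotProduct,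
    smul_dotProduct, RCLike.real_smul_eq_coe_smul (K := 𝕜)]

theorem smul_vecMulVec_le_add_smul_vecMulVec {v w : ι → 𝕜} {s u l₁ l₂ t : ℝ}
    (h₁ : 0 < l₁) (h₂ : 0 < l₂) (ht : 0 ≤ t) (htl : t * (l₂ * s ^ 2 + l₁ * u ^ 2) ≤ l₁ * l₂) :
    t • vecMulVec ((s : 𝕜) • v + (u : 𝕜) • w) (star ((s : 𝕜) • v + (u : 𝕜) • w)) ≤
      l₁ • vecMulVec v (star v) + l₂ • vecMulVec w (star w) := by
  set φ := (s : 𝕜) • v + (u : 𝕜) • w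
  have herm := (((posSemidef_vecMulVec_self_star v).smul h₁.le).add
    ((posSemidef_vecMulVec_self_star w).smul h₂.le)).isHermitian.sub
    ((posSemidef_vecMulVec_self_star φ).smul ht).isHermitian
  refine le_iff.2 (.of_dotProduct_mulVec_nonneg herm fun x => ?_)
  have hquad : t * ‖star φ ⬝ᵥ x‖ ^ 2 ≤ l₁ * ‖star v ⬝ᵥ x‖ ^ 2 + l₂ * ‖star w ⬝ᵥ x‖ ^ 2 := by
    have hcs := mul_mul_norm_smul_add_smul_sq_le (star v ⬝ᵥ x) (star w ⬝ᵥ x) s u h₁.le h₂.le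
    rw [← star_ofReal_smul_add_dotProduct] at hcs
    refine le_of_mul_le_mul_left ?_ (mul_pos h₁ h₂)
    calc l₁ * l₂ * (t * ‖star φ ⬝ᵥ x‖ ^ 2) = t * (l₁ * l₂ * ‖star φ ⬝ᵥ x‖ ^ 2) := by ring
      _ ≤ t * (l₂ * s ^ 2 + l₁ * u ^ 2) * (l₁ * ‖star v ⬝ᵥ x‖ ^ 2 + l₂ * ‖star w ⬝ᵥ x‖ ^ 2) :=
        (mul_le_mul_of_nonneg_left hcs ht).trans_eq (mul_assoc _ _ _).symm
      _ ≤ _ := by gcongr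
  simp only [sub_mulVec, add_mulVec, smul_mulVec, dotProduct_sub, dotProduct_add, dotProduct_smul,
    dotProduct_vecMulVec_self_star_mulVec, RCLike.real_smul_eq_coe_mul (K := 𝕜)]
  exact_mod_cast (RCLike.ofReal_nonneg (K := 𝕜)).2 (sub_nonneg.2 hquad)

end Matrix

theorem choi_no_entangled_min_eigenspace_general {d : ℕ}
    (E : Matrix (Fin d × Fin d) (Fin d × Fin d) ℂ)
    (lam1 lam2 : ℝ) (hl1 : 0 < lam1) (hl12 : lam1 < lam2)
    (P₁ : Matrix (Fin d × Fin d) (Fin d × Fin d) ℂ)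
    (hP1proj : P₁ * P₁ = P₁) (hP1herm : P₁.IsHermitian)
    (hgap : (E - ((lam1 : ℝ) • P₁ + (lam2 : ℝ) • (1 - P₁))).PosSemidef)
    (v vperp φ : Fin d × Fin d → ℂ)
    (hv : star v ⬝ᵥ v = 1) (hvperp : star vperp ⬝ᵥ vperp = 1)
    (hPv : P₁ *ᵥ v = v) (hPvperp : P₁ *ᵥ vperp = 0)
    (α : ℝ) (hα0 : 0 ≤ α) (hα1 : α < 1)
    (hφ : φ = (Real.sqrt α : ℂ) • v + (Real.sqrt (1 - α) : ℂ) • vperp) :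
    lam1 < lam1 * lam2 / (lam1 + (lam2 - lam1) * α) ∧
    (E - (lam1 * lam2 / (lam1 + (lam2 - lam1) * α)) •
        Matrix.vecMulVec φ (star φ)).PosSemidef := by
  have hD : 0 < lam1 + (lam2 - lam1) * α := by nlinarith
  have hl2 : 0 < lam2 := hl1.trans hl12
  have hP : IsStarProjection P₁ := ⟨hP1proj, hP1herm⟩
  have hQvperp : (1 - P₁) *ᵥ vperp = vperp := by rw [sub_mulVec, one_mulVec, hPvperp, sub_zero]
  refine ⟨?_, le_iff.1 ?_⟩
  · rw [lt_div_iff₀ hD]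
    nlinarith [mul_pos (mul_pos hl1 (sub_pos.2 hl12)) (sub_pos.2 hα1)]
  subst hφ
  calc _ ≤ lam1 • vecMulVec v (star v) + lam2 • vecMulVec vperp (star vperp) := by
        refine smul_vecMulVec_le_add_smul_vecMulVec hl1 hl2 (by positivity) ?_
        rw [Real.sq_sqrt hα0, Real.sq_sqrt (by linarith), div_mul_eq_mul_div, div_le_iff₀ hD]
        exact le_of_eq (by ring)
    _ ≤ lam1 • P₁ + lam2 • (1 - P₁) := add_le_add
        (smul_le_smul_of_nonneg_left (vecMulVec_self_star_le hP hv hPv) hl1.le)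
        (smul_le_smul_of_nonneg_left (vecMulVec_self_star_le hP.one_sub hvperp hQvperp) hl2.le)
    _ ≤ E := le_iff.2 hgap

theorem choi_no_entangled_min_eigenspace {d : ℕ} [NeZero d]
    (E : Matrix (Fin d × Fin d) (Fin d × Fin d) ℂ) (hE : E.PosSemidef)
    (hChoi : ∀ i j : Fin d,
      ∑ k : Fin d, E (k, i) (k, j) = if i = j then (d : ℂ)⁻¹ else 0)
    (lam1 lam2 : ℝ) (hl1 : 0 < lam1) (hl12 : lam1 < lam2)
    (P₁ : Matrix (Fin d × Fin d) (Fin d × Fin d) ℂ)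
    (hP1proj : P₁ * P₁ = P₁) (hP1herm : P₁.IsHermitian)
    (hEP1 : E * P₁ = (lam1 : ℂ) • P₁)
    (hgap : (E - ((lam1 : ℝ) • P₁ + (lam2 : ℝ) • (1 - P₁))).PosSemidef)
    (v vperp φ : Fin d × Fin d → ℂ)
    (hv : star v ⬝ᵥ v = 1) (hvperp : star vperp ⬝ᵥ vperp = 1)
    (hPv : P₁ *ᵥ v = v) (hPvperp : P₁ *ᵥ vperp = 0)
    (α : ℝ) (hα0 : 0 ≤ α) (hα1 : α < 1)
    (hφ : φ = (Real.sqrt α : ℂ) • v + (Real.sqrt (1 - α) : ℂ) • vperp)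
    (hent : ∀ i j : Fin d,
      ∑ k : Fin d, φ (i, k) * star (φ (j, k)) = if i = j then (d : ℂ)⁻¹ else 0) :
    lam1 < lam1 * lam2 / (lam1 + (lam2 - lam1) * α) ∧
    (E - (lam1 * lam2 / (lam1 + (lam2 - lam1) * α)) •
        Matrix.vecMulVec φ (star φ)).PosSemidef :=
  choi_no_entangled_min_eigenspace_general E lam1 lam2 hl1 hl12 P₁ hP1proj hP1herm hgap v vperp φ hv
    hvperp hPv hPvperp α hα0 hα1 hφ
end

section
/- Let ϱ be a density operator on a finite-dimensional Hilbert space with minimal eigenvalue λ_min and corresponding unit eigenvector |ψ⟩. Then the trace norm satisfies ‖ϱ - |ψ⟩⟨ψ|‖₁ = 2(1 - λ_min); consequently sup over all states ξ of ‖ϱ - ξ‖₁ equals 2(1 - b(ϱ)) = 2(1 - λ_min). -/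
open Matrix
open scoped ComplexOrder

/-- The trace norm `‖A‖₁ = tr √(A†A)`. -/
noncomputable def traceNorm {d : ℕ} (A : Matrix (Fin d) (Fin d) ℂ) : ℝ :=
  (((Matrix.posSemidef_conjTranspose_mul_self A).1.eigenvectorUnitary.1 *
      diagonal ((fun x : ℝ => (x : ℂ)) ∘ (√·) ∘ (Matrix.posSemidef_conjTranspose_mul_self A).1.eigenvalues) *
      (star (Matrix.posSemidef_conjTranspose_mul_self A).1.eigenvectorUnitary : Matrix (Fin d) (Fin d) ℂ)).trace).re

/-!
Write `P = |ψ⟩⟨ψ|`. Since `ϱ P = λ P`, the decomposition `ϱ - P = (ϱ - λP) - (1 - λ)P` is a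
difference of positive matrices with zero product, hence the Jordan decomposition of `ϱ - P`, and
`‖ϱ - P‖₁ = tr (ϱ - λP) + (1 - λ) = 2(1 - λ)`.

For an arbitrary state `ξ`, the traceless matrix `ϱ - ξ` has `‖ϱ - ξ‖₁ = 2 tr (ϱ - ξ)⁺`. Writing
`ϱ - ξ = (ϱ - λξ) - (1 - λ)ξ` with `ϱ - λξ ≥ λ(1 - ξ) ≥ 0` and compressing by the spectral
projection `Q` onto the nonnegative part gives `tr (ϱ - ξ)⁺ = tr Q(ϱ - ξ) ≤ tr (ϱ - λξ) = 1 - λ`.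

Finally `(ϱ - tξ)/(1 - t)` is a state exactly when `tξ ≤ ϱ`. This holds for every state `ξ` once
`t ≤ λ`, and for `ξ = P` only then (test it on `ψ`), so the boundariness of `ϱ` is `λ`.
-/

open scoped MatrixOrder

namespace Matrix

section Order

variable {n 𝕜 : Type*} [Fintype n] [DecidableEq n] [RCLike 𝕜]

theorem trace_mul_nonneg {Q M : Matrix n n 𝕜} (hQ : 0 ≤ Q) (hM : 0 ≤ M) :
    0 ≤ (Q * M).trace := by
  have hQ' : CFC.sqrt Q * CFC.sqrt Q = Q := CFC.sqrt_mul_sqrt_self Q hQ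
  have hsq : (CFC.sqrt Q)ᴴ = CFC.sqrt Q := (CFC.sqrt_nonneg Q).isSelfAdjoint
  calc (0 : 𝕜) ≤ ((CFC.sqrt Q)ᴴ * M * CFC.sqrt Q).trace :=
        ((nonneg_iff_posSemidef.mp hM).conjTranspose_mul_mul_same _).trace_nonneg
    _ = (Q * M).trace := by rw [hsq, trace_mul_cycle, hQ']

theorem le_one_of_trace_eq_one {ξ : Matrix n n 𝕜} (hξ : 0 ≤ ξ) (htr : ξ.trace = 1) : ξ ≤ 1 := by
  have hH := nonneg_iff_posSemidef.mp hξ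
  rw [CFC.le_one_iff (R := ℝ) ξ hH.1.isSelfAdjoint, hH.1.spectrum_real_eq_range_eigenvalues]
  rintro _ ⟨i, rfl⟩
  have hsum : ∑ j, hH.1.eigenvalues j = 1 := by
    have := hH.1.trace_eq_sum_eigenvalues
    rw [htr] at this
    exact_mod_cast this.symm
  exact hsum ▸ Finset.single_le_sum (fun j _ => hH.eigenvalues_nonneg j) (Finset.mem_univ i)

theorem exists_mul_eq_posPart {A : Matrix n n 𝕜} (hA : IsSelfAdjoint A) :
    ∃ Q : Matrix n n 𝕜, 0 ≤ Q ∧ Q ≤ 1 ∧ Q * A = A⁺ := by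
  have hcont : ContinuousOn (fun x : ℝ => if 0 ≤ x then (1 : ℝ) else 0) (spectrum ℝ A) :=
    A.finite_real_spectrum.continuousOn _
  refine ⟨cfc (fun x : ℝ => if 0 ≤ x then (1 : ℝ) else 0) A,
    cfc_nonneg fun x _ => by split_ifs <;> norm_num,
    cfc_le_one _ _ fun x _ => by split_ifs <;> norm_num, ?_⟩
  nth_rw 2 [← cfc_id' ℝ A]
  rw [CFC.posPart_def, cfcₙ_eq_cfc, ← cfc_mul _ _ _ hcont]
  refine cfc_congr fun x _ => ?_
  split_ifs with hx
  · simp [posPart_of_nonneg hx]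
  · simp [posPart_of_nonpos (le_of_not_ge hx)]

theorem trace_posPart_sub_le {X Y : Matrix n n 𝕜} (hX : 0 ≤ X) (hY : 0 ≤ Y) :
    (X - Y)⁺.trace ≤ X.trace := by
  obtain ⟨Q, hQ0, hQ1, hQA⟩ :=
    exists_mul_eq_posPart ((IsSelfAdjoint.of_nonneg hX).sub (.of_nonneg hY))
  calc (X - Y)⁺.trace = (Q * X).trace - (Q * Y).trace := by rw [← hQA, mul_sub, trace_sub]
    _ ≤ (Q * X).trace := sub_le_self _ (trace_mul_nonneg hQ0 hY)
    _ ≤ X.trace := by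
      have := trace_mul_nonneg (sub_nonneg.mpr hQ1) hX
      rwa [sub_mul, one_mul, trace_sub, sub_nonneg] at this

end Order

theorem smul_le_of_smul_one_le {n 𝕜 : Type*} [DecidableEq n] [RCLike 𝕜] {ρ ξ : Matrix n n 𝕜}
    {s t : ℝ} (hξ : ξ ≤ 1) (ht : 0 ≤ t) (hts : t ≤ s) (hs : s • 1 ≤ ρ) : t • ξ ≤ ρ := by
  rw [le_iff] at hs hξ ⊢
  have hsum : ρ - t • ξ = (ρ - s • 1) + ((s - t) • 1 + t • (1 - ξ)) := by module
  rw [hsum]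
  exact hs.add ((PosSemidef.one.smul (sub_nonneg.mpr hts)).add (hξ.smul ht))

theorem PosSemidef.eigenvalue_nonneg {n 𝕜 : Type*} [Fintype n] [RCLike 𝕜] {M : Matrix n n 𝕜}
    (hM : M.PosSemidef) {ψ : n → 𝕜} (hψ : star ψ ⬝ᵥ ψ = 1) {c : ℝ}
    (h : M *ᵥ ψ = (c : 𝕜) • ψ) : 0 ≤ c := by
  have := hM.dotProduct_mulVec_nonneg ψ
  rwa [h, dotProduct_smul, hψ, smul_eq_mul, mul_one, RCLike.ofReal_nonneg] at this

section vecMulVec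

variable {n R : Type*} [Fintype n] [CommSemiring R] [Star R] {ψ : n → R}

theorem vecMulVec_mul_self (hψ : star ψ ⬝ᵥ ψ = 1) :
    vecMulVec ψ (star ψ) * vecMulVec ψ (star ψ) = vecMulVec ψ (star ψ) := by
  rw [vecMulVec_mul_vecMulVec, hψ, one_smul]

theorem mul_vecMulVec_of_mulVec_eq {M : Matrix n n R} {c : R} (h : M *ᵥ ψ = c • ψ) :
    M * vecMulVec ψ (star ψ) = c • vecMulVec ψ (star ψ) := by
  rw [mul_vecMulVec, h, smul_vecMulVec]

end vecMulVec

end Matrix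

def densityMatrices (n : Type*) [Fintype n] : Set (Matrix n n ℂ) :=
  {ρ | ρ.PosSemidef ∧ ρ.trace = 1}

section densityMatrices

variable {n : Type*} [Fintype n]

theorem vecMulVec_mem_densityMatrices {ψ : n → ℂ} (hψ : star ψ ⬝ᵥ ψ = 1) :
    vecMulVec ψ (star ψ) ∈ densityMatrices n :=
  ⟨posSemidef_vecMulVec_self_star ψ, by rw [trace_vecMulVec, dotProduct_comm, hψ]⟩

variable [DecidableEq n]

theorem le_one_of_mem_densityMatrices {ξ : Matrix n n ℂ} (hξ : ξ ∈ densityMatrices n) : ξ ≤ 1 :=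
  le_one_of_trace_eq_one (nonneg_iff_posSemidef.mpr hξ.1) hξ.2

theorem smul_inv_sub_mem_densityMatrices_iff {ρ ξ : Matrix n n ℂ} (hρ : ρ ∈ densityMatrices n)
    (hξ : ξ ∈ densityMatrices n) {t : ℝ} (ht : t < 1) :
    (1 - t)⁻¹ • (ρ - t • ξ) ∈ densityMatrices n ↔ t • ξ ≤ ρ := by
  have hpos : 0 < 1 - t := sub_pos.mpr ht
  have htr : ((1 - t)⁻¹ • (ρ - t • ξ)).trace = 1 := by
    rw [trace_smul, trace_sub, trace_smul, hρ.2, hξ.2, ← Complex.coe_smul, ← Complex.coe_smul]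
    have hne : (1 : ℂ) - t ≠ 0 := by exact_mod_cast hpos.ne'
    rw [smul_eq_mul, smul_eq_mul, mul_one, Complex.ofReal_inv, Complex.ofReal_sub,
      Complex.ofReal_one, inv_mul_cancel₀ hne]
  simp only [densityMatrices, Set.mem_ofPred_eq, htr, and_true, ← nonneg_iff_posSemidef,
    smul_nonneg_iff_nonneg_of_pos_left (inv_pos.mpr hpos), sub_nonneg]

theorem eigenvalue_mem_Icc_of_mem_densityMatrices {ρ : Matrix n n ℂ}
    (hρ : ρ ∈ densityMatrices n) {ψ : n → ℂ} (hψ : star ψ ⬝ᵥ ψ = 1) {c : ℝ}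
    (h : ρ *ᵥ ψ = (c : ℂ) • ψ) : c ∈ Set.Icc 0 1 := by
  have h1 : (1 - ρ) *ᵥ ψ = ((1 - c : ℝ) : ℂ) • ψ := by
    rw [sub_mulVec, one_mulVec, h, Complex.ofReal_sub, Complex.ofReal_one, sub_smul, one_smul]
  exact ⟨hρ.1.eigenvalue_nonneg hψ h,
    sub_nonneg.mp ((le_iff.mp (le_one_of_mem_densityMatrices hρ)).eigenvalue_nonneg hψ h1)⟩

variable {ρ : Matrix n n ℂ} {lam : ℝ}

theorem le_weight_densityMatrices (hρ : ρ ∈ densityMatrices n) (hmin : lam • 1 ≤ ρ)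
    (hlam : lam ∈ Set.Icc 0 1) {ξ : Matrix n n ℂ} (hξ : ξ ∈ densityMatrices n) :
    lam ≤ weight (densityMatrices n) ρ ξ := by
  have hbdd : BddAbove {t : ℝ | 0 ≤ t ∧ t < 1 ∧ (1 - t)⁻¹ • (ρ - t • ξ) ∈ densityMatrices n} :=
    ⟨1, fun t ht => ht.2.1.le⟩
  have hmem : ∀ t, 0 ≤ t → t < 1 → t ≤ lam →
      t ∈ {t : ℝ | 0 ≤ t ∧ t < 1 ∧ (1 - t)⁻¹ • (ρ - t • ξ) ∈ densityMatrices n} :=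
    fun t ht0 ht1 htl => ⟨ht0, ht1, (smul_inv_sub_mem_densityMatrices_iff hρ hξ ht1).mpr
      (smul_le_of_smul_one_le (le_one_of_mem_densityMatrices hξ) ht0 htl hmin)⟩
  rcases hlam.1.eq_or_lt with rfl | hpos
  · exact le_csSup hbdd (hmem 0 le_rfl one_pos le_rfl)
  · rw [weight, ← csSup_Ico hpos]
    exact csSup_le_csSup hbdd (Set.nonempty_Ico.mpr hpos)
      fun t ht => hmem t ht.1 (ht.2.trans_le hlam.2) ht.2.le

theorem weight_densityMatrices_vecMulVec_le (hρ : ρ ∈ densityMatrices n) {ψ : n → ℂ}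
    (hψ : star ψ ⬝ᵥ ψ = 1) (heig : ρ *ᵥ ψ = (lam : ℂ) • ψ) :
    weight (densityMatrices n) ρ (vecMulVec ψ (star ψ)) ≤ lam := by
  have hP := vecMulVec_mem_densityMatrices hψ
  refine csSup_le ⟨0, le_rfl, one_pos, ?_⟩ fun t ⟨_, ht1, ht⟩ => ?_
  · simpa only [sub_zero, inv_one, zero_smul, one_smul] using hρ
  · have hle := (smul_inv_sub_mem_densityMatrices_iff hρ hP ht1).mp ht
    have heig' : (ρ - t • vecMulVec ψ (star ψ)) *ᵥ ψ = ((lam - t : ℝ) : ℂ) • ψ := by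
      rw [sub_mulVec, smul_mulVec, vecMulVec_mulVec, heig, hψ, MulOpposite.op_one, one_smul,
        Complex.ofReal_sub, sub_smul, Complex.coe_smul, Complex.coe_smul]
    exact sub_nonneg.mp ((le_iff.mp hle).eigenvalue_nonneg hψ heig')

theorem bdness_densityMatrices_eq (hρ : ρ ∈ densityMatrices n) {ψ : n → ℂ}
    (hψ : star ψ ⬝ᵥ ψ = 1) (heig : ρ *ᵥ ψ = (lam : ℂ) • ψ) (hmin : lam • 1 ≤ ρ) :
    bdness (densityMatrices n) ρ = lam := by
  have hlam := eigenvalue_mem_Icc_of_mem_densityMatrices hρ hψ heig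
  have hP := vecMulVec_mem_densityMatrices hψ
  refine IsLeast.csInf_eq ⟨⟨_, hP, ?_⟩, ?_⟩
  · exact (weight_densityMatrices_vecMulVec_le hρ hψ heig).antisymm
      (le_weight_densityMatrices hρ hmin hlam hP)
  · rintro _ ⟨ξ, hξ, rfl⟩
    exact le_weight_densityMatrices hρ hmin hlam hξ

end densityMatrices

section traceNorm

variable {d : ℕ}

theorem traceNorm_eq_re_trace_abs (A : Matrix (Fin d) (Fin d) ℂ) :
    traceNorm A = (CFC.abs A).trace.re := by
  have hA := posSemidef_conjTranspose_mul_self A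
  rw [CFC.abs, star_eq_conjTranspose, CFC.sqrt_eq_real_sqrt _ (nonneg_iff_posSemidef.mpr hA),
    cfcₙ_eq_cfc, hA.1.cfc_eq, IsHermitian.cfc, Unitary.conjStarAlgAut_apply]
  rfl

theorem traceNorm_eq_re_trace_posPart_add_negPart {A : Matrix (Fin d) (Fin d) ℂ}
    (hA : A.IsHermitian) : traceNorm A = (A⁺ + A⁻).trace.re := by
  rw [traceNorm_eq_re_trace_abs, CFC.posPart_add_negPart A hA.isSelfAdjoint]

theorem traceNorm_sub_of_mul_eq_zero {B C : Matrix (Fin d) (Fin d) ℂ}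
    (hB : 0 ≤ B) (hC : 0 ≤ C) (hBC : B * C = 0) : traceNorm (B - C) = (B + C).trace.re := by
  obtain ⟨hpos, hneg⟩ := CFC.posPart_negPart_unique rfl hBC hB hC
  rw [traceNorm_eq_re_trace_posPart_add_negPart, hpos, hneg]
  exact (nonneg_iff_posSemidef.mp hB).1.sub (nonneg_iff_posSemidef.mp hC).1

theorem traceNorm_eq_two_mul_re_trace_posPart {A : Matrix (Fin d) (Fin d) ℂ}
    (hA : A.IsHermitian) (htr : A.trace = 0) : traceNorm A = 2 * (A⁺).trace.re := by
  have hsub : A⁺.trace - A⁻.trace = 0 := by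
    rw [← trace_sub, CFC.posPart_sub_negPart A hA.isSelfAdjoint, htr]
  rw [traceNorm_eq_re_trace_posPart_add_negPart hA, trace_add, ← sub_eq_zero.mp hsub,
    Complex.add_re]
  ring

variable {ρ : Matrix (Fin d) (Fin d) ℂ}

theorem traceNorm_sub_le_of_smul_le (hρ : ρ ∈ densityMatrices _) {ξ : Matrix (Fin d) (Fin d) ℂ}
    (hξ : ξ ∈ densityMatrices _) {t : ℝ} (ht : t ≤ 1) (hle : t • ξ ≤ ρ) :
    traceNorm (ρ - ξ) ≤ 2 * (1 - t) := by
  have hX : 0 ≤ ρ - t • ξ := sub_nonneg.mpr hle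
  have hY : 0 ≤ (1 - t) • ξ := smul_nonneg (sub_nonneg.mpr ht) (nonneg_iff_posSemidef.mpr hξ.1)
  have hXY : ρ - t • ξ - (1 - t) • ξ = ρ - ξ := by module
  have htrX : (ρ - t • ξ).trace = ((1 - t : ℝ) : ℂ) := by
    rw [trace_sub, trace_smul, hρ.2, hξ.2]
    simp
  have hbound := trace_posPart_sub_le hX hY
  rw [hXY, htrX] at hbound
  rw [traceNorm_eq_two_mul_re_trace_posPart (hρ.1.1.sub hξ.1.1)
    (by rw [trace_sub, hρ.2, hξ.2, sub_self])]
  have := (Complex.le_def.mp hbound).1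
  rw [Complex.ofReal_re] at this
  linarith

theorem traceNorm_sub_vecMulVec (hρ : ρ ∈ densityMatrices _) {ψ : Fin d → ℂ}
    (hψ : star ψ ⬝ᵥ ψ = 1) {lam : ℝ} (heig : ρ *ᵥ ψ = (lam : ℂ) • ψ) (hmin : lam • 1 ≤ ρ) :
    traceNorm (ρ - vecMulVec ψ (star ψ)) = 2 * (1 - lam) := by
  obtain ⟨hlam0, hlam1⟩ := eigenvalue_mem_Icc_of_mem_densityMatrices hρ hψ heig
  have hP := vecMulVec_mem_densityMatrices hψ
  set P := vecMulVec ψ (star ψ)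
  have hB : 0 ≤ ρ - lam • P :=
    sub_nonneg.mpr (smul_le_of_smul_one_le (le_one_of_mem_densityMatrices hP) hlam0 le_rfl hmin)
  have hC : 0 ≤ (1 - lam) • P :=
    smul_nonneg (sub_nonneg.mpr hlam1) (nonneg_iff_posSemidef.mpr hP.1)
  have hρP : ρ * P = lam • P := by rw [mul_vecMulVec_of_mulVec_eq heig, Complex.coe_smul]
  have hBC : (ρ - lam • P) * ((1 - lam) • P) = 0 := by
    rw [mul_smul_comm, sub_mul, smul_mul_assoc, hρP, vecMulVec_mul_self hψ, sub_self, smul_zero]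
  have hsub : ρ - lam • P - (1 - lam) • P = ρ - P := by module
  rw [← hsub, traceNorm_sub_of_mul_eq_zero hB hC hBC, trace_add, trace_sub, trace_smul,
    trace_smul, hρ.2, hP.2]
  simp only [Complex.real_smul, mul_one, Complex.ofReal_sub, Complex.ofReal_one, Complex.add_re,
    Complex.sub_re, Complex.one_re, Complex.ofReal_re]
  ring

end traceNorm

theorem traceNorm_to_min_eigenvector_general {d : ℕ}
    (ϱ : Matrix (Fin d) (Fin d) ℂ) (hpos : ϱ.PosSemidef) (htr : ϱ.trace = 1)
    (lam : ℝ) (ψ : Fin d → ℂ) (hψ : star ψ ⬝ᵥ ψ = 1)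
    (heig : ϱ *ᵥ ψ = (lam : ℂ) • ψ)
    (hmin : (ϱ - (lam : ℂ) • 1).PosSemidef) :
    traceNorm (ϱ - Matrix.vecMulVec ψ (star ψ)) = 2 * (1 - lam) ∧
    sSup {r : ℝ | ∃ ξ : Matrix (Fin d) (Fin d) ℂ, ξ.PosSemidef ∧ ξ.trace = 1 ∧
        r = traceNorm (ϱ - ξ)} = 2 * (1 - lam) ∧
    sSup {r : ℝ | ∃ ξ : Matrix (Fin d) (Fin d) ℂ, ξ.PosSemidef ∧ ξ.trace = 1 ∧
        r = traceNorm (ϱ - ξ)} =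
      2 * (1 - bdness {ρ : Matrix (Fin d) (Fin d) ℂ | ρ.PosSemidef ∧ ρ.trace = 1} ϱ) := by
  have hϱ : ϱ ∈ densityMatrices (Fin d) := ⟨hpos, htr⟩
  have hmin' : lam • 1 ≤ ϱ := by rwa [le_iff, ← Complex.coe_smul]
  obtain ⟨hlam0, hlam1⟩ := eigenvalue_mem_Icc_of_mem_densityMatrices hϱ hψ heig
  have hnorm := traceNorm_sub_vecMulVec hϱ hψ heig hmin'
  have hP := vecMulVec_mem_densityMatrices hψ
  have hsup : sSup {r : ℝ | ∃ ξ : Matrix (Fin d) (Fin d) ℂ, ξ.PosSemidef ∧ ξ.trace = 1 ∧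
      r = traceNorm (ϱ - ξ)} = 2 * (1 - lam) := by
    refine IsGreatest.csSup_eq ⟨⟨_, hP.1, hP.2, hnorm.symm⟩, ?_⟩
    rintro _ ⟨ξ, hξ, hξtr, rfl⟩
    exact traceNorm_sub_le_of_smul_le hϱ ⟨hξ, hξtr⟩ hlam1 (smul_le_of_smul_one_le
      (le_one_of_mem_densityMatrices ⟨hξ, hξtr⟩) hlam0 le_rfl hmin')
  refine ⟨hnorm, hsup, ?_⟩
  rw [hsup, ← densityMatrices.eq_1, bdness_densityMatrices_eq hϱ hψ heig hmin']

theorem traceNorm_to_min_eigenvector {d : ℕ} [NeZero d]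
    (ϱ : Matrix (Fin d) (Fin d) ℂ) (hpos : ϱ.PosSemidef) (htr : ϱ.trace = 1)
    (lam : ℝ) (ψ : Fin d → ℂ) (hψ : star ψ ⬝ᵥ ψ = 1)
    (heig : ϱ *ᵥ ψ = (lam : ℂ) • ψ)
    (hmin : (ϱ - (lam : ℂ) • 1).PosSemidef) :
    traceNorm (ϱ - Matrix.vecMulVec ψ (star ψ)) = 2 * (1 - lam) ∧
    sSup {r : ℝ | ∃ ξ : Matrix (Fin d) (Fin d) ℂ, ξ.PosSemidef ∧ ξ.trace = 1 ∧
        r = traceNorm (ϱ - ξ)} = 2 * (1 - lam) ∧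
    sSup {r : ℝ | ∃ ξ : Matrix (Fin d) (Fin d) ℂ, ξ.PosSemidef ∧ ξ.trace = 1 ∧
        r = traceNorm (ϱ - ξ)} =
      2 * (1 - bdness {ρ : Matrix (Fin d) (Fin d) ℂ | ρ.PosSemidef ∧ ρ.trace = 1} ϱ) :=
  traceNorm_to_min_eigenvector_general ϱ hpos htr lam ψ hψ heig hmin
end
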